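/- arXiv:1810.00459 — 7 statements merged into one kernel-verified Lean document; each statement's English description precedes it below -/
import Mathlib

section
/- Let μ be a measure on a measurable space X and let p = 2m be a positive even integer. The functional N : L^p(μ; ℝ) → ℝ defined by N(ξ) = ∫_X ξ(x)^p dμ(x) satisfies N(ξ) = ‖ξ‖_{L^p}^p for every ξ ∈ L^p(μ; ℝ), and N is infinitely Fréchet differentiable (of class C^∞) on the Banach space L^p(μ; ℝ). -/
open MeasureTheory
open scoped ENNReal

section aux

variable {X : Type*} [MeasurableSpace X] {μ : Measure X} {p : ℕ}

/-- Generalized Hölder: the lintegral of a product of `p` functions in `L^p` is bounded by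
the product of their `L^p` seminorms. -/
lemma holder_prod_le (hp : 0 < p) (f : Fin p → Lp ℝ p μ) :
    ∫⁻ x, ∏ i, (‖(f i : X → ℝ) x‖₊ : ℝ≥0∞) ∂μ ≤ ∏ i, eLpNorm (f i) p μ := by
  have hpR : (0:ℝ) < (p:ℝ) := by exact_mod_cast hp
  have key := ENNReal.lintegral_prod_norm_pow_le (μ := μ) Finset.univ
    (f := fun i x => (‖(f i : X → ℝ) x‖₊ : ℝ≥0∞) ^ (p:ℝ))
    (fun i _ => ((Lp.aestronglyMeasurable (f i)).aemeasurable.nnnorm.coe_nnreal_ennreal).pow_const _)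
    (p := fun _ => 1/(p:ℝ))
    (by rw [Finset.sum_const, Finset.card_univ, Fintype.card_fin, nsmul_eq_mul, mul_one_div,
      div_self hpR.ne'])
    (fun i _ => by positivity)
  have hL : ∀ x, ∏ i, ((‖(f i : X → ℝ) x‖₊ : ℝ≥0∞) ^ (p:ℝ)) ^ (1/(p:ℝ))
      = ∏ i, (‖(f i : X → ℝ) x‖₊ : ℝ≥0∞) := by
    intro x
    refine Finset.prod_congr rfl fun i _ => ?_
    rw [← ENNReal.rpow_mul, mul_one_div, div_self hpR.ne', ENNReal.rpow_one]
  have hR : ∀ i : Fin p, (∫⁻ x, (‖(f i : X → ℝ) x‖₊ : ℝ≥0∞) ^ (p:ℝ) ∂μ) ^ (1/(p:ℝ))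
      = eLpNorm (f i) p μ := by
    intro i
    rw [eLpNorm_eq_lintegral_rpow_enorm_toReal (by exact_mod_cast hp.ne') (by simp)]
    simp [enorm_eq_nnnorm]
  calc ∫⁻ x, ∏ i, (‖(f i : X → ℝ) x‖₊ : ℝ≥0∞) ∂μ
      = ∫⁻ x, ∏ i, ((‖(f i : X → ℝ) x‖₊ : ℝ≥0∞) ^ (p:ℝ)) ^ (1/(p:ℝ)) ∂μ := by
        simp_rw [hL]
    _ ≤ ∏ i, (∫⁻ x, (‖(f i : X → ℝ) x‖₊ : ℝ≥0∞) ^ (p:ℝ) ∂μ) ^ (1/(p:ℝ)) := key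
    _ = ∏ i, eLpNorm (f i) p μ := Finset.prod_congr rfl fun i _ => hR i

/-- The product of `p` functions in `L^p` is integrable. -/
lemma integrable_prod (hp : 0 < p) [Fact (1 ≤ (p : ℝ≥0∞))] (f : Fin p → Lp ℝ p μ) :
    Integrable (fun x => ∏ i, (f i : X → ℝ) x) μ := by
  refine ⟨Finset.aestronglyMeasurable_fun_prod _ fun i _ => Lp.aestronglyMeasurable (f i), ?_⟩
  show (∫⁻ x, (‖∏ i, (f i : X → ℝ) x‖₊ : ℝ≥0∞) ∂μ) < ∞
  calc ∫⁻ x, (‖∏ i, (f i : X → ℝ) x‖₊ : ℝ≥0∞) ∂μ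
      = ∫⁻ x, ∏ i, (‖(f i : X → ℝ) x‖₊ : ℝ≥0∞) ∂μ := by
        refine lintegral_congr fun x => ?_
        rw [nnnorm_prod]; push_cast; rfl
    _ ≤ ∏ i, eLpNorm (f i) p μ := holder_prod_le hp f
    _ < ∞ := by
        refine ENNReal.prod_lt_top fun i _ => ?_
        exact Lp.eLpNorm_lt_top (f i)

/-- Bound on the integral of a product. -/
lemma abs_integral_prod_le (hp : 0 < p) [Fact (1 ≤ (p : ℝ≥0∞))] (f : Fin p → Lp ℝ p μ) :
    ‖∫ x, ∏ i, (f i : X → ℝ) x ∂μ‖ ≤ ∏ i, ‖f i‖ := by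
  calc ‖∫ x, ∏ i, (f i : X → ℝ) x ∂μ‖
      ≤ (∫⁻ x, (‖∏ i, (f i : X → ℝ) x‖₊ : ℝ≥0∞) ∂μ).toReal := by
        simpa only [ofReal_norm, enorm_eq_nnnorm] using
          norm_integral_le_lintegral_norm (fun x => ∏ i, (f i : X → ℝ) x)
    _ ≤ (∏ i, eLpNorm (f i) p μ).toReal := by
        refine ENNReal.toReal_mono ?_ ?_
        · exact (ENNReal.prod_lt_top fun i _ => Lp.eLpNorm_lt_top (f i)).ne
        · calc ∫⁻ x, (‖∏ i, (f i : X → ℝ) x‖₊ : ℝ≥0∞) ∂μ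
              = ∫⁻ x, ∏ i, (‖(f i : X → ℝ) x‖₊ : ℝ≥0∞) ∂μ := by
                refine lintegral_congr fun x => ?_
                rw [nnnorm_prod]; push_cast; rfl
            _ ≤ ∏ i, eLpNorm (f i) p μ := holder_prod_le hp f
    _ = ∏ i, ‖f i‖ := by
        rw [ENNReal.toReal_prod]
        exact Finset.prod_congr rfl fun i _ => (Lp.norm_def (f i)).symm

/-- Coercion commutes with `Function.update`. -/
lemma coe_update [DecidableEq (Fin p)] (f : Fin p → Lp ℝ p μ) (i : Fin p) (c : Lp ℝ p μ) (j : Fin p) :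
    ((Function.update f i c j : Lp ℝ p μ) : X → ℝ)
      = Function.update (fun k => ((f k : X → ℝ))) i (c : X → ℝ) j := by
  rcases eq_or_ne j i with rfl | hj
  · simp
  · simp [Function.update_of_ne hj]

/-- The multilinear functional `f ↦ ∫ ∏ᵢ fᵢ` on `(L^p)^p`. -/
noncomputable def prodIntegralML (hp : 0 < p) (μ : Measure X) [Fact (1 ≤ (p : ℝ≥0∞))] :
    MultilinearMap ℝ (fun _ : Fin p => Lp ℝ p μ) ℝ where
  toFun f := ∫ x, ∏ i, (f i : X → ℝ) x ∂μ
  map_update_add' := by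
    intro inst f i a b
    have ha := integrable_prod hp (Function.update f i a)
    have hb := integrable_prod hp (Function.update f i b)
    rw [← integral_add ha hb]
    refine integral_congr_ae ?_
    filter_upwards [Lp.coeFn_add a b] with x hx
    simp only [Pi.add_apply] at hx
    simp only [coe_update]
    have hup : ∀ c : Lp ℝ (p : ℝ≥0∞) μ,
        (∏ j, Function.update (fun k => ((f k : X → ℝ))) i (c : X → ℝ) j x)
          = (c : X → ℝ) x * ∏ j ∈ Finset.univ.erase i, (f j : X → ℝ) x := by
      intro c
      rw [show (fun j => Function.update (fun k => ((f k : X → ℝ))) i (c : X → ℝ) j x)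
          = Function.update (fun k => (f k : X → ℝ) x) i ((c : X → ℝ) x) from
        funext fun j => Function.apply_update (fun (_ : Fin p) (v : X → ℝ) => v x) _ i _ j,
        Finset.prod_update_of_mem (Finset.mem_univ i), Finset.sdiff_singleton_eq_erase]
    rw [hup, hup, hup, hx, add_mul]
  map_update_smul' := by
    intro inst f i c a
    have ha := integrable_prod hp (Function.update f i a)
    rw [← integral_smul]
    refine integral_congr_ae ?_
    filter_upwards [Lp.coeFn_smul c a] with x hx
    simp only [Pi.smul_apply] at hx
    simp only [coe_update]
    have hup : ∀ d : Lp ℝ (p : ℝ≥0∞) μ,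
        (∏ j, Function.update (fun k => ((f k : X → ℝ))) i (d : X → ℝ) j x)
          = (d : X → ℝ) x * ∏ j ∈ Finset.univ.erase i, (f j : X → ℝ) x := by
      intro d
      rw [show (fun j => Function.update (fun k => ((f k : X → ℝ))) i (d : X → ℝ) j x)
          = Function.update (fun k => (f k : X → ℝ) x) i ((d : X → ℝ) x) from
        funext fun j => Function.apply_update (fun (_ : Fin p) (v : X → ℝ) => v x) _ i _ j,
        Finset.prod_update_of_mem (Finset.mem_univ i), Finset.sdiff_singleton_eq_erase]
    rw [hup, hup, hx]
    simp [mul_assoc]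

/-- The continuous multilinear functional `f ↦ ∫ ∏ᵢ fᵢ` on `(L^p)^p`. -/
noncomputable def prodIntegralCML (hp : 0 < p) (μ : Measure X) [Fact (1 ≤ (p : ℝ≥0∞))] :
    ContinuousMultilinearMap ℝ (fun _ : Fin p => Lp ℝ p μ) ℝ :=
  (prodIntegralML hp μ).mkContinuous 1 fun f => by
    rw [one_mul]
    exact abs_integral_prod_le hp f

lemma prodIntegralCML_apply (hp : 0 < p) (μ : Measure X) [Fact (1 ≤ (p : ℝ≥0∞))]
    (f : Fin p → Lp ℝ p μ) :
    prodIntegralCML hp μ f = ∫ x, ∏ i, (f i : X → ℝ) x ∂μ := rfl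

end aux

/-- For a positive even integer `p = 2m`, the functional `N(ξ) = ∫ ξ^p dμ` on `L^p(μ; ℝ)`
equals `‖ξ‖_{L^p}^p` and is infinitely Fréchet differentiable. -/
theorem integral_pow_eq_norm_pow_and_contDiff {X : Type*} [MeasurableSpace X] (μ : Measure X)
    (m : ℕ) (hm : 0 < m) (p : ℕ) (hp : p = 2 * m) [Fact (1 ≤ (p : ℝ≥0∞))] :
    (∀ ξ : Lp ℝ p μ, (∫ x, (ξ : X → ℝ) x ^ p ∂μ) = ‖ξ‖ ^ p) ∧
      ContDiff ℝ (⊤ : ℕ∞) (fun ξ : Lp ℝ p μ => ∫ x, (ξ : X → ℝ) x ^ p ∂μ) := by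
  have hp0 : 0 < p := by omega
  have hpe : Even p := ⟨m, by omega⟩
  have hpR : (0:ℝ) < (p:ℝ) := by exact_mod_cast hp0
  constructor
  · intro ξ
    have hmem : MemLp (ξ : X → ℝ) p μ := Lp.memLp ξ
    -- the pointwise nonneg function |ξ x|^p
    have hxe : ∀ x : X, (ξ : X → ℝ) x ^ p = |(ξ : X → ℝ) x| ^ p := fun x =>
      (hpe.pow_abs _).symm
    have hnn : 0 ≤ᵐ[μ] fun x => (ξ : X → ℝ) x ^ p :=
      Filter.Eventually.of_forall fun x => by
        simp only [Pi.zero_apply]; rw [hxe]; positivity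
    have hameas : AEMeasurable (fun x => (ξ : X → ℝ) x ^ p) μ :=
      ((Lp.aestronglyMeasurable ξ).aemeasurable).pow_const p
    rw [integral_eq_lintegral_of_nonneg_ae hnn hameas.aestronglyMeasurable]
    have hofReal : ∀ x : X, ENNReal.ofReal ((ξ : X → ℝ) x ^ p)
        = (‖(ξ : X → ℝ) x‖₊ : ℝ≥0∞) ^ (p:ℝ) := by
      intro x
      rw [hxe, ← Real.norm_eq_abs, ENNReal.ofReal_pow (norm_nonneg _),
        ofReal_norm, enorm_eq_nnnorm, ← ENNReal.rpow_natCast]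
    simp_rw [hofReal]
    have hsnorm : eLpNorm (ξ : X → ℝ) p μ
        = (∫⁻ x, (‖(ξ : X → ℝ) x‖₊ : ℝ≥0∞) ^ (p:ℝ) ∂μ) ^ (1/(p:ℝ)) := by
      rw [eLpNorm_eq_lintegral_rpow_enorm_toReal (by exact_mod_cast hp0.ne') (by simp)]
      simp [enorm_eq_nnnorm]
    have hfin : (∫⁻ x, (‖(ξ : X → ℝ) x‖₊ : ℝ≥0∞) ^ (p:ℝ) ∂μ) ≠ ∞ := by
      intro h
      have := Lp.eLpNorm_lt_top ξ
      rw [hsnorm, h, ENNReal.top_rpow_of_pos (by positivity)] at this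
      exact absurd this (by simp)
    rw [Lp.norm_def, hsnorm]
    rw [← ENNReal.toReal_rpow, ← Real.rpow_natCast _ p, ← Real.rpow_mul ENNReal.toReal_nonneg,
      one_div, inv_mul_cancel₀ hpR.ne', Real.rpow_one]
  · have h1 : (fun ξ : Lp ℝ p μ => ∫ x, (ξ : X → ℝ) x ^ p ∂μ)
        = (fun f : Fin p → Lp ℝ p μ => prodIntegralCML hp0 μ f)
          ∘ (fun ξ : Lp ℝ p μ => fun _ : Fin p => ξ) := by
      funext ξ
      simp only [Function.comp_apply, prodIntegralCML_apply]
      refine integral_congr_ae (Filter.Eventually.of_forall fun x => ?_)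
      simp [Finset.prod_const, Finset.card_univ]
    rw [h1]
    exact ((prodIntegralCML hp0 μ).contDiff).comp
      (contDiff_pi.2 fun _ => contDiff_id)
end

section
/- Let E be a real Hilbert space, let μ be a measure on a measurable space X, and let p = 2m be a positive even integer. The functional N : L^p(μ; E) → ℝ defined by N(ξ) = ∫_X ⟨ξ(x), ξ(x)⟩^m dμ(x) satisfies N(ξ) = ‖ξ‖_{L^p}^p for every ξ ∈ L^p(μ; E), and N is infinitely Fréchet differentiable (of class C^∞) on the Banach space L^p(μ; E). -/
open MeasureTheory
open scoped ENNReal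

set_option linter.unusedSectionVars false

section Aux

variable {X : Type*} [MeasurableSpace X] {μ : Measure X} {E : Type*}
  [NormedAddCommGroup E] [InnerProductSpace ℝ E] [CompleteSpace E] {m p : ℕ}

lemma aux_prod_le_sum_pow {ι : Type*} [Fintype ι] [Nonempty ι] (a : ι → ℝ)
    (ha : ∀ i, 0 ≤ a i) : ∏ i, a i ≤ ∑ i, a i ^ (Fintype.card ι) := by
  obtain ⟨i₀, -, h⟩ := Finset.exists_max_image Finset.univ a
    ⟨Classical.arbitrary ι, Finset.mem_univ _⟩
  calc ∏ i, a i ≤ ∏ _i : ι, a i₀ :=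
        Finset.prod_le_prod (fun i _ => ha i) (fun i _ => h i (Finset.mem_univ i))
    _ = a i₀ ^ Fintype.card ι := by rw [Finset.prod_const, Finset.card_univ]
    _ ≤ ∑ i, a i ^ Fintype.card ι :=
        Finset.single_le_sum (fun i _ => pow_nonneg (ha i) _) (Finset.mem_univ i₀)

lemma aux_integrable_prod_norm [Fact (1 ≤ (p : ℝ≥0∞))] (hm : 0 < m) (hp : p = 2 * m)
    (ξ : Fin m × Bool → Lp E p μ) :
    Integrable (fun x => ∏ i, ‖(ξ i : X → E) x‖) μ := by
  haveI : Nonempty (Fin m) := ⟨⟨0, hm⟩⟩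
  have hp0 : p ≠ 0 := by omega
  have hint : Integrable (fun x => ∑ i : Fin m × Bool, ‖(ξ i : X → E) x‖ ^ p) μ := by
    apply integrable_finset_sum
    intro i _
    have := (Lp.memLp (ξ i)).integrable_norm_rpow (by exact_mod_cast hp0) (by simp)
    simpa [Real.rpow_natCast] using this
  refine hint.mono' ?_ ?_
  · exact Finset.aestronglyMeasurable_fun_prod _
      (fun i _ => (Lp.aestronglyMeasurable (ξ i)).norm)
  · filter_upwards with x
    rw [Real.norm_of_nonneg (Finset.prod_nonneg fun i _ => norm_nonneg _)]
    have := aux_prod_le_sum_pow (fun i : Fin m × Bool => ‖(ξ i : X → E) x‖)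
      (fun i => norm_nonneg _)
    simpa [Fintype.card_prod, hp, mul_comm] using this

lemma aux_integral_prod_norm_le [Fact (1 ≤ (p : ℝ≥0∞))] (hm : 0 < m) (hp : p = 2 * m)
    (ξ : Fin m × Bool → Lp E p μ) :
    ∫ x, ∏ i, ‖(ξ i : X → E) x‖ ∂μ ≤ ∏ i, ‖ξ i‖ := by
  have hp0 : p ≠ 0 := by omega
  have hp0' : (p : ℝ) ≠ 0 := by exact_mod_cast hp0
  have hpe0 : (p : ℝ≥0∞) ≠ 0 := by exact_mod_cast hp0
  have h1 : ∫ x, ∏ i, ‖(ξ i : X → E) x‖ ∂μ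
      = (∫⁻ x, ∏ i, (‖(ξ i : X → E) x‖₊ : ℝ≥0∞) ∂μ).toReal := by
    rw [integral_eq_lintegral_of_nonneg_ae
      (Filter.Eventually.of_forall fun x => Finset.prod_nonneg fun i _ => norm_nonneg _)
      (Finset.aestronglyMeasurable_fun_prod _ fun i _ => (Lp.aestronglyMeasurable (ξ i)).norm)]
    congr 1
    apply lintegral_congr fun x => ?_
    rw [ENNReal.ofReal_prod_of_nonneg fun i _ => norm_nonneg _]
    exact Finset.prod_congr rfl fun i _ => ofReal_norm_eq_enorm _
  rw [h1]
  have key : (∫⁻ x, ∏ i, (‖(ξ i : X → E) x‖₊ : ℝ≥0∞) ∂μ)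
      ≤ ∏ i, eLpNorm (ξ i) p μ := by
    have := ENNReal.lintegral_prod_norm_pow_le (μ := μ) Finset.univ
      (f := fun (i : Fin m × Bool) x => (‖(ξ i : X → E) x‖₊ : ℝ≥0∞) ^ (p : ℕ))
      (fun i _ => ((Lp.aestronglyMeasurable (ξ i)).enorm).pow_const _)
      (p := fun _ => 1 / (p : ℝ))
      (by
        rw [Finset.sum_const, Finset.card_univ, Fintype.card_prod, Fintype.card_fin,
          Fintype.card_bool, nsmul_eq_mul]
        field_simp
        rw [hp]; push_cast; ring)
      (fun i _ => by positivity)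
    calc ∫⁻ x, ∏ i, (‖(ξ i : X → E) x‖₊ : ℝ≥0∞) ∂μ
        = ∫⁻ x, ∏ i, ((‖(ξ i : X → E) x‖₊ : ℝ≥0∞) ^ (p : ℕ)) ^ (1 / (p : ℝ)) ∂μ := by
          apply lintegral_congr fun x => Finset.prod_congr rfl fun i _ => ?_
          rw [← ENNReal.rpow_natCast _ p, ← ENNReal.rpow_mul, mul_one_div_cancel hp0',
            ENNReal.rpow_one]
      _ ≤ ∏ i, (∫⁻ x, (‖(ξ i : X → E) x‖₊ : ℝ≥0∞) ^ (p : ℕ) ∂μ) ^ (1 / (p : ℝ)) := this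
      _ = ∏ i, eLpNorm (ξ i) p μ := by
          refine Finset.prod_congr rfl fun i _ => ?_
          rw [eLpNorm_eq_lintegral_rpow_enorm_toReal hpe0 (by simp), ENNReal.toReal_natCast]
          congr 1
          exact lintegral_congr fun x => by rw [← ENNReal.rpow_natCast, enorm_eq_nnnorm]
  have hfin : ∏ i : Fin m × Bool, eLpNorm (ξ i) p μ ≠ ∞ :=
    (ENNReal.prod_lt_top fun i _ => Lp.eLpNorm_lt_top (ξ i)).ne
  calc (∫⁻ x, ∏ i, (‖(ξ i : X → E) x‖₊ : ℝ≥0∞) ∂μ).toReal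
      ≤ (∏ i : Fin m × Bool, eLpNorm (ξ i) p μ).toReal := ENNReal.toReal_mono hfin key
    _ = ∏ i, ‖ξ i‖ := by
        rw [ENNReal.toReal_prod]
        exact Finset.prod_congr rfl fun i _ => (Lp.norm_def _).symm

noncomputable def auxF (μ : Measure X) (m p : ℕ) (ξ : Fin m × Bool → Lp E p μ) : X → ℝ :=
  fun x => ∏ j : Fin m, (inner ℝ ((ξ (j, false) : X → E) x) ((ξ (j, true) : X → E) x) : ℝ)

lemma auxF_abs_le (ξ : Fin m × Bool → Lp E p μ) (x : X) :
    |auxF μ m p ξ x| ≤ ∏ i, ‖(ξ i : X → E) x‖ := by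
  rw [auxF, Finset.abs_prod, Fintype.prod_prod_type]
  refine Finset.prod_le_prod (fun j _ => abs_nonneg _) (fun j _ => ?_)
  rw [Fintype.prod_bool]
  calc |(inner ℝ ((ξ (j, false) : X → E) x) ((ξ (j, true) : X → E) x) : ℝ)|
      ≤ ‖(ξ (j, false) : X → E) x‖ * ‖(ξ (j, true) : X → E) x‖ := abs_real_inner_le_norm _ _
    _ = ‖(ξ (j, true) : X → E) x‖ * ‖(ξ (j, false) : X → E) x‖ := mul_comm _ _

lemma aux_aesm_F (ξ : Fin m × Bool → Lp E p μ) :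
    AEStronglyMeasurable (auxF μ m p ξ) μ :=
  Finset.aestronglyMeasurable_fun_prod _ fun j _ =>
    (Lp.aestronglyMeasurable (ξ (j, false))).inner (Lp.aestronglyMeasurable (ξ (j, true)))

lemma aux_integrable_F [Fact (1 ≤ (p : ℝ≥0∞))] (hm : 0 < m) (hp : p = 2 * m)
    (ξ : Fin m × Bool → Lp E p μ) : Integrable (auxF μ m p ξ) μ := by
  refine (aux_integrable_prod_norm hm hp ξ).mono' (aux_aesm_F ξ) ?_
  filter_upwards with x
  rw [Real.norm_eq_abs]
  exact auxF_abs_le ξ x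

lemma auxF_update_false {inst : DecidableEq (Fin m × Bool)}
    (ξ : Fin m × Bool → Lp E p μ) (j₀ : Fin m) (w : Lp E p μ) (x : X) :
    auxF μ m p (@Function.update _ _ inst ξ (j₀, false) w) x =
      (inner ℝ ((w : X → E) x) ((ξ (j₀, true) : X → E) x) : ℝ) *
        ∏ j ∈ Finset.univ.erase j₀,
          (inner ℝ ((ξ (j, false) : X → E) x) ((ξ (j, true) : X → E) x) : ℝ) := by
  rw [auxF, ← Finset.mul_prod_erase Finset.univ _ (Finset.mem_univ j₀)]
  congr 1
  · rw [Function.update_self, Function.update_of_ne (by simp)]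
  · refine Finset.prod_congr rfl fun j hj => ?_
    have hj' : j ≠ j₀ := Finset.ne_of_mem_erase hj
    rw [Function.update_of_ne (by simp [hj']), Function.update_of_ne (by simp [hj'])]

lemma auxF_update_true {inst : DecidableEq (Fin m × Bool)}
    (ξ : Fin m × Bool → Lp E p μ) (j₀ : Fin m) (w : Lp E p μ) (x : X) :
    auxF μ m p (@Function.update _ _ inst ξ (j₀, true) w) x =
      (inner ℝ ((ξ (j₀, false) : X → E) x) ((w : X → E) x) : ℝ) *
        ∏ j ∈ Finset.univ.erase j₀,
          (inner ℝ ((ξ (j, false) : X → E) x) ((ξ (j, true) : X → E) x) : ℝ) := by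
  rw [auxF, ← Finset.mul_prod_erase Finset.univ _ (Finset.mem_univ j₀)]
  congr 1
  · rw [Function.update_self, Function.update_of_ne (by simp)]
  · refine Finset.prod_congr rfl fun j hj => ?_
    have hj' : j ≠ j₀ := Finset.ne_of_mem_erase hj
    rw [Function.update_of_ne (by simp [hj']), Function.update_of_ne (by simp [hj'])]

noncomputable def auxB (μ : Measure X) (E : Type*) [NormedAddCommGroup E]
    [InnerProductSpace ℝ E] [CompleteSpace E] (m p : ℕ) (hm : 0 < m) (hp : p = 2 * m)
    [Fact (1 ≤ (p : ℝ≥0∞))] :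
    MultilinearMap ℝ (fun _ : Fin m × Bool => Lp E p μ) ℝ where
  toFun ξ := ∫ x, auxF μ m p ξ x ∂μ
  map_update_add' := by
    intro inst ξ i u v
    obtain ⟨j₀, b⟩ := i
    cases b
    · have hc : ∀ w : Lp E p μ, auxF μ m p (@Function.update _ _ inst ξ (j₀, false) w)
          = fun x => (inner ℝ ((w : X → E) x) ((ξ (j₀, true) : X → E) x) : ℝ) *
            ∏ j ∈ Finset.univ.erase j₀,
              (inner ℝ ((ξ (j, false) : X → E) x) ((ξ (j, true) : X → E) x) : ℝ) :=
        fun w => funext (auxF_update_false ξ j₀ w)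
      have hint : ∀ w : Lp E p μ,
          Integrable (fun x => (inner ℝ ((w : X → E) x) ((ξ (j₀, true) : X → E) x) : ℝ) *
            ∏ j ∈ Finset.univ.erase j₀,
              (inner ℝ ((ξ (j, false) : X → E) x) ((ξ (j, true) : X → E) x) : ℝ)) μ :=
        fun w => hc w ▸ aux_integrable_F hm hp _
      simp only [hc]
      have hae : (fun x => (inner ℝ (((u + v : Lp E p μ) : X → E) x)
            ((ξ (j₀, true) : X → E) x) : ℝ) *
            ∏ j ∈ Finset.univ.erase j₀,
              (inner ℝ ((ξ (j, false) : X → E) x) ((ξ (j, true) : X → E) x) : ℝ))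
          =ᵐ[μ] (fun x => (inner ℝ ((u : X → E) x) ((ξ (j₀, true) : X → E) x) : ℝ) *
              ∏ j ∈ Finset.univ.erase j₀,
                (inner ℝ ((ξ (j, false) : X → E) x) ((ξ (j, true) : X → E) x) : ℝ))
            + fun x => (inner ℝ ((v : X → E) x) ((ξ (j₀, true) : X → E) x) : ℝ) *
              ∏ j ∈ Finset.univ.erase j₀,
                (inner ℝ ((ξ (j, false) : X → E) x) ((ξ (j, true) : X → E) x) : ℝ) := by
        filter_upwards [Lp.coeFn_add u v] with x hx
        simp only [hx, Pi.add_apply, inner_add_left, add_mul]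
      rw [integral_congr_ae hae]
      simp only [Pi.add_apply]
      rw [integral_add (hint u) (hint v)]
    · have hc : ∀ w : Lp E p μ, auxF μ m p (@Function.update _ _ inst ξ (j₀, true) w)
          = fun x => (inner ℝ ((ξ (j₀, false) : X → E) x) ((w : X → E) x) : ℝ) *
            ∏ j ∈ Finset.univ.erase j₀,
              (inner ℝ ((ξ (j, false) : X → E) x) ((ξ (j, true) : X → E) x) : ℝ) :=
        fun w => funext (auxF_update_true ξ j₀ w)
      have hint : ∀ w : Lp E p μ,
          Integrable (fun x => (inner ℝ ((ξ (j₀, false) : X → E) x) ((w : X → E) x) : ℝ) *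
            ∏ j ∈ Finset.univ.erase j₀,
              (inner ℝ ((ξ (j, false) : X → E) x) ((ξ (j, true) : X → E) x) : ℝ)) μ :=
        fun w => hc w ▸ aux_integrable_F hm hp _
      simp only [hc]
      have hae : (fun x => (inner ℝ ((ξ (j₀, false) : X → E) x)
            (((u + v : Lp E p μ) : X → E) x) : ℝ) *
            ∏ j ∈ Finset.univ.erase j₀,
              (inner ℝ ((ξ (j, false) : X → E) x) ((ξ (j, true) : X → E) x) : ℝ))
          =ᵐ[μ] (fun x => (inner ℝ ((ξ (j₀, false) : X → E) x) ((u : X → E) x) : ℝ) *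
              ∏ j ∈ Finset.univ.erase j₀,
                (inner ℝ ((ξ (j, false) : X → E) x) ((ξ (j, true) : X → E) x) : ℝ))
            + fun x => (inner ℝ ((ξ (j₀, false) : X → E) x) ((v : X → E) x) : ℝ) *
              ∏ j ∈ Finset.univ.erase j₀,
                (inner ℝ ((ξ (j, false) : X → E) x) ((ξ (j, true) : X → E) x) : ℝ) := by
        filter_upwards [Lp.coeFn_add u v] with x hx
        simp only [hx, Pi.add_apply, inner_add_right, add_mul]
      rw [integral_congr_ae hae]
      simp only [Pi.add_apply]
      rw [integral_add (hint u) (hint v)]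
  map_update_smul' := by
    intro inst ξ i c u
    obtain ⟨j₀, b⟩ := i
    cases b
    · have hc : ∀ w : Lp E p μ, auxF μ m p (@Function.update _ _ inst ξ (j₀, false) w)
          = fun x => (inner ℝ ((w : X → E) x) ((ξ (j₀, true) : X → E) x) : ℝ) *
            ∏ j ∈ Finset.univ.erase j₀,
              (inner ℝ ((ξ (j, false) : X → E) x) ((ξ (j, true) : X → E) x) : ℝ) :=
        fun w => funext (auxF_update_false ξ j₀ w)
      simp only [hc]
      have hae : (fun x => (inner ℝ (((c • u : Lp E p μ) : X → E) x)
            ((ξ (j₀, true) : X → E) x) : ℝ) *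
            ∏ j ∈ Finset.univ.erase j₀,
              (inner ℝ ((ξ (j, false) : X → E) x) ((ξ (j, true) : X → E) x) : ℝ))
          =ᵐ[μ] fun x => c • ((inner ℝ ((u : X → E) x) ((ξ (j₀, true) : X → E) x) : ℝ) *
              ∏ j ∈ Finset.univ.erase j₀,
                (inner ℝ ((ξ (j, false) : X → E) x) ((ξ (j, true) : X → E) x) : ℝ)) := by
        filter_upwards [Lp.coeFn_smul c u] with x hx
        simp only [hx, Pi.smul_apply, real_inner_smul_left, smul_eq_mul, mul_assoc]
      rw [integral_congr_ae hae, integral_smul]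
    · have hc : ∀ w : Lp E p μ, auxF μ m p (@Function.update _ _ inst ξ (j₀, true) w)
          = fun x => (inner ℝ ((ξ (j₀, false) : X → E) x) ((w : X → E) x) : ℝ) *
            ∏ j ∈ Finset.univ.erase j₀,
              (inner ℝ ((ξ (j, false) : X → E) x) ((ξ (j, true) : X → E) x) : ℝ) :=
        fun w => funext (auxF_update_true ξ j₀ w)
      simp only [hc]
      have hae : (fun x => (inner ℝ ((ξ (j₀, false) : X → E) x)
            (((c • u : Lp E p μ) : X → E) x) : ℝ) *
            ∏ j ∈ Finset.univ.erase j₀,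
              (inner ℝ ((ξ (j, false) : X → E) x) ((ξ (j, true) : X → E) x) : ℝ))
          =ᵐ[μ] fun x => c • ((inner ℝ ((ξ (j₀, false) : X → E) x) ((u : X → E) x) : ℝ) *
              ∏ j ∈ Finset.univ.erase j₀,
                (inner ℝ ((ξ (j, false) : X → E) x) ((ξ (j, true) : X → E) x) : ℝ)) := by
        filter_upwards [Lp.coeFn_smul c u] with x hx
        simp only [hx, Pi.smul_apply, real_inner_smul_right, smul_eq_mul, mul_assoc]
      rw [integral_congr_ae hae, integral_smul]

lemma auxB_bound (μ : Measure X) (m p : ℕ) (hm : 0 < m) (hp : p = 2 * m)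
    [Fact (1 ≤ (p : ℝ≥0∞))] (ξ : Fin m × Bool → Lp E p μ) :
    ‖auxB μ E m p hm hp ξ‖ ≤ 1 * ∏ i, ‖ξ i‖ := by
  rw [one_mul]
  calc ‖auxB μ E m p hm hp ξ‖ = ‖∫ x, auxF μ m p ξ x ∂μ‖ := rfl
    _ ≤ ∫ x, ‖auxF μ m p ξ x‖ ∂μ := norm_integral_le_integral_norm _
    _ ≤ ∫ x, ∏ i, ‖(ξ i : X → E) x‖ ∂μ := by
        refine integral_mono (aux_integrable_F hm hp ξ).norm
          (aux_integrable_prod_norm hm hp ξ) fun x => ?_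
        rw [Real.norm_eq_abs]
        exact auxF_abs_le ξ x
    _ ≤ ∏ i, ‖ξ i‖ := aux_integral_prod_norm_le hm hp ξ

lemma aux_integral_norm_pow [Fact (1 ≤ (p : ℝ≥0∞))] (hp0 : p ≠ 0) (ξ : Lp E p μ) :
    ∫ x, ‖(ξ : X → E) x‖ ^ p ∂μ = ‖ξ‖ ^ p := by
  have hp0' : (p : ℝ) ≠ 0 := by exact_mod_cast hp0
  have hpe0 : (p : ℝ≥0∞) ≠ 0 := by exact_mod_cast hp0
  have hL : ∫ x, ‖(ξ : X → E) x‖ ^ p ∂μ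
      = (∫⁻ x, (‖(ξ : X → E) x‖₊ : ℝ≥0∞) ^ (p : ℕ) ∂μ).toReal := by
    rw [integral_eq_lintegral_of_nonneg_ae
      (Filter.Eventually.of_forall fun x => pow_nonneg (norm_nonneg _) _)
      (((Lp.aestronglyMeasurable ξ).norm.aemeasurable.pow_const _).aestronglyMeasurable)]
    congr 1
    apply lintegral_congr fun x => ?_
    rw [ENNReal.ofReal_pow (norm_nonneg _), ofReal_norm_eq_enorm, enorm_eq_nnnorm]
  rw [hL, Lp.norm_def, eLpNorm_eq_lintegral_rpow_enorm_toReal hpe0 (by simp), ENNReal.toReal_natCast]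
  rw [← ENNReal.toReal_pow]
  congr 1
  rw [← ENNReal.rpow_natCast (_ ^ (1 / (p : ℝ))) p, ← ENNReal.rpow_mul,
    one_div_mul_cancel hp0', ENNReal.rpow_one]
  exact lintegral_congr fun x => by rw [← ENNReal.rpow_natCast, enorm_eq_nnnorm]

end Aux

/-- For a real Hilbert space `E` and a positive even integer `p = 2m`, the functional
`N(ξ) = ∫ ⟨ξ(x), ξ(x)⟩^m dμ` on `L^p(μ; E)` equals `‖ξ‖_{L^p}^p` and is infinitely
Fréchet differentiable. -/
theorem integral_inner_pow_eq_norm_pow_and_contDiff {X : Type*} [MeasurableSpace X]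
    (μ : Measure X) (E : Type*) [NormedAddCommGroup E] [InnerProductSpace ℝ E]
    [CompleteSpace E] (m : ℕ) (hm : 0 < m) (p : ℕ) (hp : p = 2 * m)
    [Fact (1 ≤ (p : ℝ≥0∞))] :
    (∀ ξ : Lp E p μ,
        (∫ x, (inner ℝ ((ξ : X → E) x) ((ξ : X → E) x) : ℝ) ^ m ∂μ) = ‖ξ‖ ^ p) ∧
      ContDiff ℝ (⊤ : ℕ∞)
        (fun ξ : Lp E p μ => ∫ x, (inner ℝ ((ξ : X → E) x) ((ξ : X → E) x) : ℝ) ^ m ∂μ) := by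
  have hp0 : p ≠ 0 := by omega
  constructor
  · intro ξ
    have hpt : ∀ x : X, (inner ℝ ((ξ : X → E) x) ((ξ : X → E) x) : ℝ) ^ m
        = ‖(ξ : X → E) x‖ ^ p := by
      intro x
      rw [real_inner_self_eq_norm_sq, ← pow_mul, ← hp]
    rw [integral_congr_ae (Filter.Eventually.of_forall hpt)]
    exact aux_integral_norm_pow hp0 ξ
  · set Bc : ContinuousMultilinearMap ℝ (fun _ : Fin m × Bool => Lp E p μ) ℝ :=
      (auxB μ E m p hm hp).mkContinuous 1 (auxB_bound μ m p hm hp) with hBc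
    have hfun : (fun ξ : Lp E p μ =>
          ∫ x, (inner ℝ ((ξ : X → E) x) ((ξ : X → E) x) : ℝ) ^ m ∂μ)
        = fun ξ : Lp E p μ => Bc (fun _ => ξ) := by
      funext ξ
      have : Bc (fun _ => ξ) = ∫ x, auxF μ m p (fun _ => ξ) x ∂μ := rfl
      rw [this]
      refine integral_congr_ae (Filter.Eventually.of_forall fun x => ?_)
      simp [auxF, Finset.prod_const]
    rw [hfun]
    exact Bc.contDiff.comp
      (ContinuousLinearMap.pi fun _ : Fin m × Bool =>
        ContinuousLinearMap.id ℝ (Lp E p μ)).contDiff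
end

section
/- Let μ be a measure on a measurable space X and let p = 2m be a positive even integer. The functional N : L^p(μ; ℝ) → ℝ, N(ξ) = ∫_X ξ(x)^p dμ(x), is Fréchet differentiable at every ξ ∈ L^p(μ; ℝ), and its Fréchet derivative at ξ is the bounded linear functional η ↦ p · ∫_X ξ(x)^{p-1} η(x) dμ(x). -/
/-!
Expand `(ξ + η) ^ p` binomially. The two top-order terms give `ξ ^ p` and `p ξ ^ (p - 1) η`;
each remaining term `C(p, k) ξ ^ k η ^ (p - k)` has `p - k ≥ 2`, and Hölder's inequality with
exponents `p / k` and `p / (p - k)` bounds its integral by `C(p, k) ‖ξ‖ ^ k ‖η‖ ^ (p - k)`,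
which is `o(‖η‖)`. The same Hölder bound with `k = p - 1` makes the derivative a bounded
functional.
-/

open MeasureTheory Asymptotics Topology
open scoped ENNReal

namespace MeasureTheory

variable {X 𝕜 : Type*} [MeasurableSpace X] {μ : Measure X} [NormedDivisionRing 𝕜]

lemma eLpNorm_pow_le_pow (f : X → 𝕜) {p : ℕ} (hp : p ≠ 0) (a : ℕ) :
    eLpNorm (fun x => f x ^ a) (p / a) μ ≤ eLpNorm f p μ ^ a := by
  rcases Nat.eq_zero_or_pos a with rfl | ha
  -- `p / 0 = ∞` in `ℝ≥0∞`
  · rw [Nat.cast_zero, ENNReal.div_zero (by exact_mod_cast hp), pow_zero]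
    exact (eLpNorm_le_of_ae_bound (C := 1) (by simp)).trans (by simp)
  have h := eLpNorm_norm_rpow (μ := μ) (p := p / a) f (q := a) (by exact_mod_cast ha)
  rw [ENNReal.ofReal_natCast, ENNReal.div_mul_cancel (by exact_mod_cast ha.ne')
    (ENNReal.natCast_ne_top a), ENNReal.rpow_natCast] at h
  refine le_of_eq (Eq.trans (eLpNorm_congr_norm_ae (.of_forall fun x => ?_)) h)
  simp

lemma eLpNorm_pow_mul_pow_le {f g : X → 𝕜} (hf : AEStronglyMeasurable f μ)
    (hg : AEStronglyMeasurable g μ) {a b p : ℕ} (hab : a + b = p) (hp : p ≠ 0) :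
    eLpNorm (fun x => f x ^ a * g x ^ b) 1 μ ≤ eLpNorm f p μ ^ a * eLpNorm g p μ ^ b := by
  have hp' : (p : ℝ≥0∞) ≠ 0 := by exact_mod_cast hp
  have : ENNReal.HolderTriple (p / a) (p / b) 1 := ⟨by
    rw [ENNReal.inv_div (.inl (ENNReal.natCast_ne_top _)) (.inr hp'),
      ENNReal.inv_div (.inl (ENNReal.natCast_ne_top _)) (.inr hp'), ENNReal.div_add_div_same,
      ← Nat.cast_add, hab, ENNReal.div_self hp' (ENNReal.natCast_ne_top _), inv_one]⟩
  calc eLpNorm (fun x => f x ^ a * g x ^ b) 1 μ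
      ≤ eLpNorm (fun x => f x ^ a) (p / a) μ * eLpNorm (fun x => g x ^ b) (p / b) μ := by
        simpa only [ENNReal.coe_one, one_mul] using
          eLpNorm_le_eLpNorm_mul_eLpNorm'_of_norm (f := fun x => f x ^ a) (g := fun x => g x ^ b)
            (hf.pow a) (hg.pow b) (· * ·) 1 (by simp)
    _ ≤ eLpNorm f p μ ^ a * eLpNorm g p μ ^ b := by
        gcongr <;> exact eLpNorm_pow_le_pow _ hp _

end MeasureTheory

lemma add_pow_sub_pow_sub_mul_pow {R : Type*} [CommRing R] (x y : R) {p : ℕ} (hp : p ≠ 0) :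
    (x + y) ^ p - x ^ p - p * (x ^ (p - 1) * y)
      = ∑ k ∈ Finset.range (p - 1), p.choose k * (x ^ k * y ^ (p - k)) := by
  obtain ⟨n, rfl⟩ := Nat.exists_eq_add_one_of_ne_zero hp
  rw [add_pow, Finset.sum_range_succ, Finset.sum_range_succ, Nat.add_sub_cancel]
  simp only [Nat.choose_self, Nat.choose_succ_self_right, Nat.sub_self,
    Nat.add_sub_cancel_left, pow_zero, pow_one]
  push_cast
  ring_nf

namespace MeasureTheory.Lp

variable {X : Type*} [MeasurableSpace X] {μ : Measure X} {p : ℕ} [Fact (1 ≤ (p : ℝ≥0∞))]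

lemma natExponent_ne_zero : p ≠ 0 :=
  Nat.one_le_iff_ne_zero.mp (Nat.one_le_cast.mp (Fact.out : 1 ≤ (p : ℝ≥0∞)))

lemma integrable_pow_mul_pow (f g : Lp ℝ p μ) {a b : ℕ} (hab : a + b = p) :
    Integrable (fun x => f x ^ a * g x ^ b) μ := by
  rw [← memLp_one_iff_integrable]
  refine ⟨((Lp.aestronglyMeasurable f).pow a).mul ((Lp.aestronglyMeasurable g).pow b), ?_⟩
  exact (eLpNorm_pow_mul_pow_le (Lp.aestronglyMeasurable f) (Lp.aestronglyMeasurable g) hab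
    natExponent_ne_zero).trans_lt (by finiteness [Lp.eLpNorm_lt_top f, Lp.eLpNorm_lt_top g])

lemma norm_integral_pow_mul_pow_le (f g : Lp ℝ p μ) {a b : ℕ} (hab : a + b = p) :
    ‖∫ x, f x ^ a * g x ^ b ∂μ‖ ≤ ‖f‖ ^ a * ‖g‖ ^ b := by
  have h : ‖∫ x, f x ^ a * g x ^ b ∂μ‖ₑ ≤ ‖f‖ₑ ^ a * ‖g‖ₑ ^ b := by
    rw [Lp.enorm_def, Lp.enorm_def]
    calc ‖∫ x, f x ^ a * g x ^ b ∂μ‖ₑ ≤ eLpNorm (fun x => f x ^ a * g x ^ b) 1 μ := by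
          rw [eLpNorm_one_eq_lintegral_enorm]; exact enorm_integral_le_lintegral_enorm _
      _ ≤ _ := eLpNorm_pow_mul_pow_le (Lp.aestronglyMeasurable f) (Lp.aestronglyMeasurable g)
          hab natExponent_ne_zero
  calc ‖∫ x, f x ^ a * g x ^ b ∂μ‖ = ‖∫ x, f x ^ a * g x ^ b ∂μ‖ₑ.toReal :=
        (toReal_enorm _).symm
    _ ≤ (‖f‖ₑ ^ a * ‖g‖ₑ ^ b).toReal := ENNReal.toReal_mono (by finiteness) h
    _ = ‖f‖ ^ a * ‖g‖ ^ b := by simp [ENNReal.toReal_mul, ENNReal.toReal_pow]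

lemma integrable_pow (f : Lp ℝ p μ) : Integrable (fun x => f x ^ p) μ := by
  simpa using integrable_pow_mul_pow f f (add_zero p)

lemma integrable_pow_sub_one_mul (ξ η : Lp ℝ p μ) :
    Integrable (fun x => ξ x ^ (p - 1) * η x) μ := by
  simpa using integrable_pow_mul_pow ξ η (Nat.sub_one_add_one natExponent_ne_zero)

variable (μ p) in
noncomputable def integralPowDeriv (ξ : Lp ℝ p μ) : Lp ℝ p μ →L[ℝ] ℝ :=
  LinearMap.mkContinuous
    { toFun := fun η => p * ∫ x, ξ x ^ (p - 1) * η x ∂μ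
      map_add' := fun f g => by
        rw [← mul_add, ← integral_add (integrable_pow_sub_one_mul ξ f)
          (integrable_pow_sub_one_mul ξ g)]
        congr 1
        refine integral_congr_ae ?_
        filter_upwards [Lp.coeFn_add f g] with x hx
        rw [hx, Pi.add_apply, mul_add]
      map_smul' := fun c f => by
        rw [RingHom.id_apply, smul_eq_mul, mul_left_comm c, ← integral_const_mul c]
        congr 1
        refine integral_congr_ae ?_
        filter_upwards [Lp.coeFn_smul c f] with x hx
        rw [hx, Pi.smul_apply, smul_eq_mul, mul_left_comm] }
    (p * ‖ξ‖ ^ (p - 1)) fun η => by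
      simpa [mul_assoc] using mul_le_mul_of_nonneg_left
        (norm_integral_pow_mul_pow_le ξ η (Nat.sub_one_add_one natExponent_ne_zero))
        (Nat.cast_nonneg p)

lemma integralPowDeriv_apply (ξ η : Lp ℝ p μ) :
    integralPowDeriv μ p ξ η = p * ∫ x, ξ x ^ (p - 1) * η x ∂μ := rfl

lemma integral_add_pow_sub_integralPowDeriv (ξ η : Lp ℝ p μ) :
    ∫ x, (ξ + η) x ^ p ∂μ - ∫ x, ξ x ^ p ∂μ - integralPowDeriv μ p ξ η
      = ∑ k ∈ Finset.range (p - 1), p.choose k * ∫ x, ξ x ^ k * η x ^ (p - k) ∂μ := by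
  simp_rw [integralPowDeriv_apply, ← integral_const_mul]
  rw [← integral_sub (integrable_pow _) (integrable_pow _),
    ← integral_sub ?_ ((integrable_pow_sub_one_mul ξ η).const_mul _),
    ← integral_finsetSum _ fun k hk => (integrable_pow_mul_pow ξ η (Nat.add_sub_of_le
      ((Finset.mem_range.mp hk).le.trans (Nat.sub_le p 1)))).const_mul _]
  · refine integral_congr_ae ?_
    filter_upwards [Lp.coeFn_add ξ η] with x hx
    rw [hx, Pi.add_apply, add_pow_sub_pow_sub_mul_pow _ _ natExponent_ne_zero]
  · exact (integrable_pow _).sub (integrable_pow _)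

lemma isLittleO_integral_pow_mul_pow (ξ : Lp ℝ p μ) {a b : ℕ} (hab : a + b = p) (hb : 1 < b) :
    (fun η : Lp ℝ p μ => ∫ x, ξ x ^ a * η x ^ b ∂μ) =o[𝓝 0] fun η => η :=
  (IsBigO.of_bound (‖ξ‖ ^ a) (.of_forall fun η => by
    simpa using norm_integral_pow_mul_pow_le ξ η hab)).trans_isLittleO (isLittleO_norm_pow_id hb)

end MeasureTheory.Lp

theorem hasFDerivAt_integral_pow_general {X : Type*} [MeasurableSpace X] (μ : Measure X)
    (p : ℕ) [Fact (1 ≤ (p : ℝ≥0∞))] :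
    ∀ ξ : Lp ℝ p μ, ∃ L : Lp ℝ p μ →L[ℝ] ℝ,
      (∀ η : Lp ℝ p μ,
          L η = (p : ℝ) * ∫ x, (ξ : X → ℝ) x ^ (p - 1) * (η : X → ℝ) x ∂μ) ∧
        HasFDerivAt (fun ζ : Lp ℝ p μ => ∫ x, (ζ : X → ℝ) x ^ p ∂μ) L ξ := by
  intro ξ
  refine ⟨Lp.integralPowDeriv μ p ξ, Lp.integralPowDeriv_apply ξ, ?_⟩
  rw [hasFDerivAt_iff_isLittleO_nhds_zero]
  simp only [Lp.integral_add_pow_sub_integralPowDeriv]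
  refine IsLittleO.fun_sum fun k hk => ?_
  have hk : k < p - 1 := Finset.mem_range.mp hk
  exact (Lp.isLittleO_integral_pow_mul_pow ξ (Nat.add_sub_of_le (by omega)) (by omega)
    |>.const_mul_left _)

/-- For a positive even integer `p = 2m`, the functional `N(ξ) = ∫ ξ^p dμ` on `L^p(μ; ℝ)`
is Fréchet differentiable at every point `ξ`, with derivative the bounded linear functional
`η ↦ p · ∫ ξ^{p-1} η dμ`. -/
theorem hasFDerivAt_integral_pow {X : Type*} [MeasurableSpace X] (μ : Measure X)
    (m : ℕ) (hm : 0 < m) (p : ℕ) (hp : p = 2 * m) [Fact (1 ≤ (p : ℝ≥0∞))] :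
    ∀ ξ : Lp ℝ p μ, ∃ L : Lp ℝ p μ →L[ℝ] ℝ,
      (∀ η : Lp ℝ p μ,
          L η = (p : ℝ) * ∫ x, (ξ : X → ℝ) x ^ (p - 1) * (η : X → ℝ) x ∂μ) ∧
        HasFDerivAt (fun ζ : Lp ℝ p μ => ∫ x, (ζ : X → ℝ) x ^ p ∂μ) L ξ :=
  hasFDerivAt_integral_pow_general μ p
end

section
/- Let μ be a measure on a measurable space X, let p = 2m be a positive even integer, and let j be an integer with 0 ≤ j ≤ p. For every ξ ∈ L^p(μ; ℝ), the j-th iterated Fréchet derivative of the functional N : L^p(μ; ℝ) → ℝ, N(ξ) = ∫_X ξ(x)^p dμ(x), at the point ξ is the bounded symmetric j-linear map (η₁, …, η_j) ↦ (p!/(p−j)!) · ∫_X ξ(x)^{p−j} η₁(x) ⋯ η_j(x) dμ(x). -/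
/-!
Write `N(ξ) = M(ξ, …, ξ)`, where `M(η₁, …, η_p) = ∫ η₁ ⋯ η_p dμ` is a bounded `p`-linear form on
`L^p` by the generalized Hölder inequality. The `j`-th derivative of a multilinear form restricted
to the diagonal is the sum, over the injections `e : Fin j ↪ Fin p`, of `M` evaluated with `ηᵢ` in
slot `e i` and `ξ` in the remaining `p - j` slots. Every such term equals
`∫ ξ^(p-j) η₁ ⋯ η_j dμ`, and there are `p! / (p - j)!` injections.
-/

open MeasureTheory Finset
open scoped ENNReal

theorem Fintype.prod_extend_const {ι κ R M : Type*} [Fintype ι] [Fintype κ] [CommMonoid M]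
    (e : ι ↪ κ) (v : ι → R) (c : R) (φ : R → M) :
    ∏ k, φ (Function.extend e v (fun _ ↦ c) k) =
      φ c ^ (Fintype.card κ - Fintype.card ι) * ∏ i, φ (v i) := by
  classical
  rw [← prod_compl_mul_prod (univ.map e), prod_map]
  congr 1
  · rw [Finset.prod_congr rfl fun k hk ↦ ?_, prod_const, card_compl, card_map, card_univ]
    rw [Function.extend_apply']
    rintro ⟨i, rfl⟩
    simp at hk
  · exact Finset.prod_congr rfl fun i _ ↦ by rw [e.injective.extend_apply]

theorem Fintype.prod_comp_update {ι R M : Type*} [Fintype ι] [DecidableEq ι] [CommMonoid M]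
    (φ : R → M) (g : ι → R) (i : ι) (c : R) :
    ∏ k, φ (Function.update g i c k) = φ c * ∏ k ∈ univ.erase i, φ (g k) := by
  rw [← mul_prod_erase univ _ (mem_univ i), Function.update_self,
    Finset.prod_congr rfl fun k hk ↦ by rw [Function.update_of_ne (ne_of_mem_erase hk)]]

theorem ContinuousMultilinearMap.iteratedFDeriv_comp_diagonal_eq_sum_embedding
    {𝕜 ι E F : Type*} [NontriviallyNormedField 𝕜] [Fintype ι] [DecidableEq ι]
    [NormedAddCommGroup E] [NormedSpace 𝕜 E] [NormedAddCommGroup F] [NormedSpace 𝕜 F]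
    {k : ℕ} (f : ContinuousMultilinearMap 𝕜 (fun _ : ι ↦ E) F) (x : E) (v : Fin k → E) :
    iteratedFDeriv 𝕜 k (fun x ↦ f fun _ ↦ x) x v =
      ∑ e : Fin k ↪ ι, f (Function.extend e v fun _ ↦ x) := by
  let g : E →L[𝕜] (ι → E) := ContinuousLinearMap.pi fun _ ↦ ContinuousLinearMap.id 𝕜 E
  change iteratedFDeriv 𝕜 k (f ∘ g) x v = _
  rw [ContinuousLinearMap.iteratedFDeriv_comp_right _ f.contDiff _ le_top, f.iteratedFDeriv_eq]
  simp only [ContinuousMultilinearMap.iteratedFDeriv,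
    ContinuousMultilinearMap.compContinuousLinearMap_apply, _root_.sum_apply,
    ContinuousMultilinearMap.iteratedFDerivComponent_apply]
  congr with e
  congr with i
  split_ifs with h
  · obtain ⟨a, rfl⟩ := h
    simp [g, e.injective.extend_apply]
  · simp [g, Function.extend_apply' _ _ _ fun ⟨a, ha⟩ ↦ h ⟨a, ha⟩]

theorem ENNReal.sum_fin_natCast_inv {n : ℕ} (hn : (n : ℝ≥0∞) ≠ 0) :
    ∑ _i : Fin n, (n : ℝ≥0∞)⁻¹ = 1 := by
  rw [sum_const, card_univ, Fintype.card_fin, nsmul_eq_mul,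
    ENNReal.mul_inv_cancel hn (ENNReal.natCast_ne_top n)]

namespace MeasureTheory

theorem eLpNorm_prod_le {ι α 𝕜 : Type*} {_ : MeasurableSpace α} [NormedCommRing 𝕜]
    [NormOneClass 𝕜] {μ : Measure α} {f : ι → α → 𝕜} {p : ι → ℝ≥0∞} {s : Finset ι}
    (hf : ∀ i ∈ s, AEStronglyMeasurable (f i) μ) :
    eLpNorm (∏ i ∈ s, f i) (∑ i ∈ s, (p i)⁻¹)⁻¹ μ ≤ ∏ i ∈ s, eLpNorm (f i) (p i) μ := by
  induction s using cons_induction with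
  | empty => simpa using eLpNormEssSup_le_of_ae_enorm_bound (.of_forall fun _ ↦ by simp)
  | cons i s hi ih =>
    rw [prod_cons, prod_cons, sum_cons]
    have : ENNReal.HolderTriple (p i) (∑ j ∈ s, (p j)⁻¹)⁻¹ ((p i)⁻¹ + ∑ j ∈ s, (p j)⁻¹)⁻¹ :=
      ⟨by simp⟩
    refine (eLpNorm_smul_le_mul_eLpNorm (p := p i) (q := (∑ j ∈ s, (p j)⁻¹)⁻¹)
      (aestronglyMeasurable_prod _ fun j hj ↦ hf j (mem_cons_of_mem hj))
      (hf i (mem_cons_self i s))).trans ?_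
    gcongr
    exact ih fun j hj ↦ hf j (mem_cons_of_mem hj)

namespace Lp

variable {X : Type*} [MeasurableSpace X] {μ : Measure X} {p : ℕ}

theorem prod_coeFn_update [DecidableEq (Fin p)] (g : Fin p → Lp ℝ p μ) (i : Fin p)
    (c : Lp ℝ p μ) :
    (fun x ↦ ∏ k, (Function.update g i c k : X → ℝ) x) =
      fun x ↦ (c : X → ℝ) x * ∏ k ∈ univ.erase i, (g k : X → ℝ) x :=
  funext fun x ↦ Fintype.prod_comp_update (fun y : Lp ℝ p μ ↦ (y : X → ℝ) x) g i c

variable [Fact (1 ≤ (p : ℝ≥0∞))]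

theorem sum_fin_exponent_inv : ∑ _i : Fin p, (p : ℝ≥0∞)⁻¹ = 1 :=
  ENNReal.sum_fin_natCast_inv (zero_lt_one.trans_le Fact.out).ne'

theorem integrable_prod (g : Fin p → Lp ℝ p μ) : Integrable (fun x ↦ ∏ i, (g i : X → ℝ) x) μ := by
  rw [← memLp_one_iff_integrable]
  simpa only [sum_fin_exponent_inv, inv_one] using
    MemLp.prod' (s := univ) fun i _ ↦ Lp.memLp (g i)

theorem norm_integral_prod_le (g : Fin p → Lp ℝ p μ) :
    ‖∫ x, ∏ i, (g i : X → ℝ) x ∂μ‖ ≤ ∏ i, ‖g i‖ := by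
  have h_enorm : ‖∫ x, ∏ i, (g i : X → ℝ) x ∂μ‖ₑ ≤ ∏ i, eLpNorm (g i) p μ := by
    calc ‖∫ x, ∏ i, (g i : X → ℝ) x ∂μ‖ₑ
        ≤ eLpNorm (∏ i, (g i : X → ℝ)) 1 μ := by
          simpa [eLpNorm_one_eq_lintegral_enorm] using enorm_integral_le_lintegral_enorm _
      _ ≤ ∏ i, eLpNorm (g i) p μ := by
          simpa only [sum_fin_exponent_inv, inv_one] using
            eLpNorm_prod_le (s := univ) (p := fun _ ↦ (p : ℝ≥0∞)) fun i _ ↦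
              Lp.aestronglyMeasurable (g i)
  simpa [← ENNReal.toReal_prod, Lp.norm_def] using
    ENNReal.toReal_mono (ENNReal.prod_ne_top fun i _ ↦ Lp.eLpNorm_ne_top (g i)) h_enorm

variable (μ p) in
noncomputable def integralProd : ContinuousMultilinearMap ℝ (fun _ : Fin p ↦ Lp ℝ p μ) ℝ :=
  MultilinearMap.mkContinuous
    { toFun g := ∫ x, ∏ i, (g i : X → ℝ) x ∂μ
      map_update_add' g i a b := by
        have hint (c : Lp ℝ p μ) :=
          prod_coeFn_update g i c ▸ integrable_prod (Function.update g i c)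
        simp only [prod_coeFn_update]
        rw [← integral_add (hint a) (hint b)]
        exact integral_congr_ae ((Lp.coeFn_add a b).mono fun x hx ↦ by
          simp only [hx, Pi.add_apply, add_mul])
      map_update_smul' g i c a := by
        simp only [prod_coeFn_update]
        rw [smul_eq_mul, ← integral_const_mul]
        exact integral_congr_ae ((Lp.coeFn_smul c a).mono fun x hx ↦ by simp [hx, mul_assoc]) }
    1 fun g ↦ by simpa using norm_integral_prod_le g

theorem integralProd_apply (g : Fin p → Lp ℝ p μ) :
    integralProd μ p g = ∫ x, ∏ i, (g i : X → ℝ) x ∂μ :=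
  rfl

end Lp
end MeasureTheory

theorem iteratedFDeriv_integral_pow_general {X : Type*} [MeasurableSpace X] (μ : Measure X)
    (p : ℕ) [Fact (1 ≤ (p : ℝ≥0∞))]
    (j : ℕ) (hj : j ≤ p) :
    ContDiff ℝ j (fun ξ : Lp ℝ p μ => ∫ x, (ξ : X → ℝ) x ^ p ∂μ) ∧
      ∀ (ξ : Lp ℝ p μ) (η : Fin j → Lp ℝ p μ),
        iteratedFDeriv ℝ j (fun ζ : Lp ℝ p μ => ∫ x, (ζ : X → ℝ) x ^ p ∂μ) ξ η =
          ((p.factorial : ℝ) / ((p - j).factorial : ℝ)) *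
            ∫ x, (ξ : X → ℝ) x ^ (p - j) * ∏ i, (η i : X → ℝ) x ∂μ := by
  have hN : (fun ξ : Lp ℝ p μ ↦ ∫ x, (ξ : X → ℝ) x ^ p ∂μ) =
      fun ξ ↦ Lp.integralProd μ p fun _ ↦ ξ := by
    funext ξ
    simp [Lp.integralProd_apply]
  refine ⟨hN ▸ (Lp.integralProd μ p).contDiff.comp (contDiff_pi.2 fun _ ↦ contDiff_id),
    fun ξ η ↦ ?_⟩
  classical
  have hterm (e : Fin j ↪ Fin p) :
      Lp.integralProd μ p (Function.extend e η fun _ ↦ ξ) =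
        ∫ x, (ξ : X → ℝ) x ^ (p - j) * ∏ i, (η i : X → ℝ) x ∂μ := by
    rw [Lp.integralProd_apply]
    congr 1 with x
    simpa using Fintype.prod_extend_const e η ξ fun y : Lp ℝ p μ ↦ (y : X → ℝ) x
  have hcount : ((Fintype.card (Fin j ↪ Fin p) : ℕ) : ℝ) = p.factorial / (p - j).factorial := by
    rw [Fintype.card_embedding_eq, Fintype.card_fin, Fintype.card_fin,
      eq_div_iff (by positivity), mul_comm]
    exact_mod_cast Nat.factorial_mul_descFactorial hj
  rw [hN, ContinuousMultilinearMap.iteratedFDeriv_comp_diagonal_eq_sum_embedding,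
    Finset.sum_congr rfl fun e _ ↦ hterm e, sum_const, card_univ, nsmul_eq_mul, hcount]

/-- For a positive even integer `p = 2m` and `0 ≤ j ≤ p`, the functional
`N(ξ) = ∫ ξ^p dμ` on `L^p(μ; ℝ)` is `j` times continuously differentiable, and its `j`-th
iterated Fréchet derivative at `ξ` is the bounded symmetric `j`-linear map
`(η₁, …, η_j) ↦ (p!/(p−j)!) · ∫ ξ^{p−j} η₁ ⋯ η_j dμ`. -/
theorem iteratedFDeriv_integral_pow {X : Type*} [MeasurableSpace X] (μ : Measure X)
    (m : ℕ) (hm : 0 < m) (p : ℕ) (hp : p = 2 * m) [Fact (1 ≤ (p : ℝ≥0∞))]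
    (j : ℕ) (hj : j ≤ p) :
    ContDiff ℝ j (fun ξ : Lp ℝ p μ => ∫ x, (ξ : X → ℝ) x ^ p ∂μ) ∧
      ∀ (ξ : Lp ℝ p μ) (η : Fin j → Lp ℝ p μ),
        iteratedFDeriv ℝ j (fun ζ : Lp ℝ p μ => ∫ x, (ζ : X → ℝ) x ^ p ∂μ) ξ η =
          ((p.factorial : ℝ) / ((p - j).factorial : ℝ)) *
            ∫ x, (ξ : X → ℝ) x ^ (p - j) * ∏ i, (η i : X → ℝ) x ∂μ :=
  iteratedFDeriv_integral_pow_general μ p j hj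
end

section
/- Let μ be a measure on a measurable space X and let p = 2m be a positive even integer. The map B : L^p(μ; ℝ) × L^∞(μ; ℝ) → ℝ defined by B(ξ, w) = ∫_X ξ(x)^p · w(x) dμ(x) is infinitely Fréchet differentiable (of class C^∞) on the product Banach space L^p(μ; ℝ) × L^∞(μ; ℝ). -/
open MeasureTheory
open scoped ENNReal

namespace ContDiffIntegralPowAux

variable {X : Type*} [MeasurableSpace X] {μ : Measure X}

/-- Generalized Hölder: a product of `k` functions in `L^p` lies in `L^{p/k}`, with the
corresponding norm estimate. -/
lemma memℒp_prod_aux (p : ℕ) (hp0 : (p : ℝ≥0∞) ≠ 0) :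
    ∀ k : ℕ, k ≠ 0 → ∀ f : Fin k → X → ℝ, (∀ i, MemLp (f i) (p : ℝ≥0∞) μ) →
      MemLp (fun x => ∏ i, f i x) ((p : ℝ≥0∞) / (k : ℕ)) μ ∧
      eLpNorm (fun x => ∏ i, f i x) ((p : ℝ≥0∞) / (k : ℕ)) μ ≤
        ∏ i, eLpNorm (f i) (p : ℝ≥0∞) μ := by
  intro k
  induction k with
  | zero => intro h; exact absurd rfl h
  | succ k ih =>
    intro _ f hf
    rcases Nat.eq_zero_or_pos k with hk | hk
    · subst hk
      constructor
      · simpa [Fin.prod_univ_one] using hf 0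
      · simp [Fin.prod_univ_one]
    · have hkne : (k : ℝ≥0∞) ≠ 0 := by exact_mod_cast hk.ne'
      have hptop : (p : ℝ≥0∞) ≠ ∞ := ENNReal.natCast_ne_top p
      have hcast : ((k + 1 : ℕ) : ℝ≥0∞) = (k : ℝ≥0∞) + 1 := by push_cast; ring
      have hrel : (1 : ℝ≥0∞) / ((p : ℝ≥0∞) / ((k + 1 : ℕ) : ℝ≥0∞)) =
          1 / ((p : ℝ≥0∞) / (k : ℕ)) + 1 / (p : ℝ≥0∞) := by
        rw [one_div, one_div, ENNReal.inv_div (Or.inr hptop) (Or.inr hp0),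
          ENNReal.inv_div (Or.inr hptop) (Or.inr hp0), ENNReal.div_add_div_same, hcast]
      obtain ⟨hφmem, hφle⟩ := ih hk.ne' (fun i => f i.castSucc) fun i => hf _
      have hmul : (fun x => ∏ i : Fin (k + 1), f i x) =
          (fun x => ∏ i : Fin k, f i.castSucc x) • f (Fin.last k) := by
        funext x
        simp [Fin.prod_univ_castSucc]
      have hmem : MemLp ((fun x => ∏ i : Fin k, f i.castSucc x) • f (Fin.last k))
          ((p : ℝ≥0∞) / ((k + 1 : ℕ) : ℝ≥0∞)) μ :=
        (hf (Fin.last k)).smul hφmem (hpqr := ENNReal.HolderTriple.mk (by simpa only [one_div] using hrel.symm))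
      have hb : eLpNorm ((fun x => ∏ i : Fin k, f i.castSucc x) • f (Fin.last k))
            ((p : ℝ≥0∞) / ((k + 1 : ℕ) : ℝ≥0∞)) μ ≤
          eLpNorm (fun x => ∏ i : Fin k, f i.castSucc x) ((p : ℝ≥0∞) / (k : ℕ)) μ *
            eLpNorm (f (Fin.last k)) (p : ℝ≥0∞) μ :=
        eLpNorm_smul_le_mul_eLpNorm (hf (Fin.last k)).1 hφmem.1 (hpqr := ENNReal.HolderTriple.mk (by simpa only [one_div] using hrel.symm))
      constructor
      · rw [hmul]; exact hmem
      · rw [hmul, Fin.prod_univ_castSucc]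
        exact hb.trans (mul_le_mul' hφle le_rfl)

variable (μ) in
/-- The coordinate functions of the multilinear map: the first `p` slots pick the `L^p`
component, the last slot picks the `L^∞` component. -/
noncomputable def gfun (p : ℕ) [Fact (1 ≤ (p : ℝ≥0∞))] (i : Fin (p + 1))
    (e : Lp ℝ p μ × Lp ℝ ⊤ μ) : X → ℝ :=
  if i = Fin.last p then ⇑e.2 else ⇑e.1

lemma gfun_add (p : ℕ) [Fact (1 ≤ (p : ℝ≥0∞))] (i : Fin (p + 1))
    (a b : Lp ℝ p μ × Lp ℝ ⊤ μ) :
    gfun μ p i (a + b) =ᵐ[μ] gfun μ p i a + gfun μ p i b := by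
  unfold gfun
  split
  · exact Lp.coeFn_add a.2 b.2
  · exact Lp.coeFn_add a.1 b.1

lemma gfun_smul (p : ℕ) [Fact (1 ≤ (p : ℝ≥0∞))] (i : Fin (p + 1)) (c : ℝ)
    (a : Lp ℝ p μ × Lp ℝ ⊤ μ) :
    gfun μ p i (c • a) =ᵐ[μ] c • gfun μ p i a := by
  unfold gfun
  split
  · exact Lp.coeFn_smul c a.2
  · exact Lp.coeFn_smul c a.1

/-- Integrability of the full product, together with the multilinear norm bound. -/
lemma key_aux (p : ℕ) [Fact (1 ≤ (p : ℝ≥0∞))] (v : Fin (p + 1) → Lp ℝ p μ × Lp ℝ ⊤ μ) :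
    Integrable (fun x => ∏ j, gfun μ p j (v j) x) μ ∧
      ‖∫ x, ∏ j, gfun μ p j (v j) x ∂μ‖ ≤ ∏ j, ‖v j‖ := by
  have hp1 : (1 : ℝ≥0∞) ≤ (p : ℝ≥0∞) := Fact.out
  have hp0 : (p : ℝ≥0∞) ≠ 0 := by
    intro h; rw [h] at hp1; exact (by simp at hp1)
  have hpn0 : p ≠ 0 := by exact_mod_cast fun h => hp0 (by exact_mod_cast h)
  set ξ : Fin p → X → ℝ := fun i => ⇑(v i.castSucc).1 with hξ
  obtain ⟨hmem, hle⟩ := memℒp_prod_aux p hp0 p hpn0 ξ fun i => Lp.memLp _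
  have hpp : (p : ℝ≥0∞) / (p : ℕ) = 1 := ENNReal.div_self hp0 (ENNReal.natCast_ne_top p)
  rw [hpp] at hmem hle
  set w := (v (Fin.last p)).2 with hw
  have hG : (fun x => ∏ j, gfun μ p j (v j) x) = (fun x => ∏ i, ξ i x) • ⇑w := by
    funext x
    simp only [Fin.prod_univ_castSucc, Pi.smul_apply, smul_eq_mul]
    congr 1
    · refine Finset.prod_congr rfl fun i _ => ?_
      simp [gfun, (Fin.castSucc_lt_last i).ne, hξ]
    · simp [gfun, hw]
  have hpqr : (1 : ℝ≥0∞) / 1 = 1 / 1 + 1 / ∞ := by simp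
  have hmemG : MemLp (fun x => ∏ j, gfun μ p j (v j) x) 1 μ := by
    rw [hG]
    exact (Lp.memLp w).smul hmem (hpqr := ENNReal.HolderTriple.mk (by simpa only [one_div] using hpqr.symm))
  have hbG : eLpNorm (fun x => ∏ j, gfun μ p j (v j) x) 1 μ ≤
      (∏ i, eLpNorm (ξ i) (p : ℝ≥0∞) μ) * eLpNorm (⇑w) ∞ μ := by
    rw [hG]
    exact (eLpNorm_smul_le_mul_eLpNorm (Lp.memLp w).1 hmem.1 (hpqr := ENNReal.HolderTriple.mk (by simpa only [one_div] using hpqr.symm))).trans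
      (mul_le_mul' hle le_rfl)
  refine ⟨memLp_one_iff_integrable.mp hmemG, ?_⟩
  have h1 : ‖∫ x, ∏ j, gfun μ p j (v j) x ∂μ‖ ≤
      (eLpNorm (fun x => ∏ j, gfun μ p j (v j) x) 1 μ).toReal := by
    rw [eLpNorm_one_eq_lintegral_enorm, ← integral_norm_eq_lintegral_enorm hmemG.1]
    exact norm_integral_le_integral_norm _
  have hfin : (∏ i, eLpNorm (ξ i) (p : ℝ≥0∞) μ) * eLpNorm (⇑w) ∞ μ ≠ ∞ := by
    refine ENNReal.mul_ne_top ?_ (Lp.eLpNorm_ne_top w)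
    exact (ENNReal.prod_lt_top fun i _ => (Lp.eLpNorm_ne_top ((v i.castSucc).1)).lt_top).ne
  have h2 : (eLpNorm (fun x => ∏ j, gfun μ p j (v j) x) 1 μ).toReal ≤
      ((∏ i, eLpNorm (ξ i) (p : ℝ≥0∞) μ) * eLpNorm (⇑w) ∞ μ).toReal :=
    ENNReal.toReal_mono hfin hbG
  have h3 : ((∏ i, eLpNorm (ξ i) (p : ℝ≥0∞) μ) * eLpNorm (⇑w) ∞ μ).toReal =
      (∏ i : Fin p, ‖(v i.castSucc).1‖) * ‖w‖ := by
    rw [ENNReal.toReal_mul, ENNReal.toReal_prod]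
    rw [show (eLpNorm (⇑w) ∞ μ).toReal = ‖w‖ from (Lp.norm_def w).symm]
    exact congrArg (· * ‖w‖)
      (Finset.prod_congr rfl fun i _ => (Lp.norm_def ((v i.castSucc).1)).symm)
  have h4 : (∏ i : Fin p, ‖(v i.castSucc).1‖) * ‖w‖ ≤ ∏ j, ‖v j‖ := by
    rw [Fin.prod_univ_castSucc (f := fun j => ‖v j‖)]
    refine mul_le_mul ?_ (norm_snd_le _) (norm_nonneg _)
      (Finset.prod_nonneg fun _ _ => norm_nonneg _)
    exact Finset.prod_le_prod (fun _ _ => norm_nonneg _) fun i _ => norm_fst_le _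
  calc ‖∫ x, ∏ j, gfun μ p j (v j) x ∂μ‖ ≤ _ := h1
    _ ≤ _ := h2
    _ = _ := h3
    _ ≤ _ := h4

variable (μ) in
/-- The multilinear map `v ↦ ∫ ∏ gfun j (v j)`. -/
noncomputable def M (p : ℕ) [Fact (1 ≤ (p : ℝ≥0∞))] :
    MultilinearMap ℝ (fun _ : Fin (p + 1) => Lp ℝ p μ × Lp ℝ ⊤ μ) ℝ where
  toFun v := ∫ x, ∏ j, gfun μ p j (v j) x ∂μ
  map_update_add' := by
    intro _ v i a b
    have hsplit : ∀ c : Lp ℝ p μ × Lp ℝ ⊤ μ,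
        (fun x => ∏ j, gfun μ p j (Function.update v i c j) x) =
          fun x => (∏ j ∈ Finset.univ.erase i, gfun μ p j (v j) x) * gfun μ p i c x := by
      intro c
      funext x
      rw [← Finset.prod_erase_mul Finset.univ _ (Finset.mem_univ i), Function.update_self]
      congr 1
      exact Finset.prod_congr rfl fun j hj => by
        rw [Function.update_of_ne (Finset.ne_of_mem_erase hj)]
    have hint : ∀ c : Lp ℝ p μ × Lp ℝ ⊤ μ,
        Integrable (fun x => (∏ j ∈ Finset.univ.erase i, gfun μ p j (v j) x) *
          gfun μ p i c x) μ := by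
      intro c
      have := (key_aux p (Function.update v i c)).1
      rwa [show (fun x => ∏ j, gfun μ p j (Function.update v i c j) x) = _ from hsplit c]
        at this
    simp only [hsplit]
    rw [← integral_add (hint a) (hint b)]
    refine integral_congr_ae ?_
    filter_upwards [gfun_add p i a b] with x hx
    simp only [Pi.add_apply] at hx
    rw [hx]
    ring
  map_update_smul' := by
    intro _ v i c a
    have hsplit : ∀ e : Lp ℝ p μ × Lp ℝ ⊤ μ,
        (fun x => ∏ j, gfun μ p j (Function.update v i e j) x) =
          fun x => (∏ j ∈ Finset.univ.erase i, gfun μ p j (v j) x) * gfun μ p i e x := by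
      intro e
      funext x
      rw [← Finset.prod_erase_mul Finset.univ _ (Finset.mem_univ i), Function.update_self]
      congr 1
      exact Finset.prod_congr rfl fun j hj => by
        rw [Function.update_of_ne (Finset.ne_of_mem_erase hj)]
    simp only [hsplit]
    rw [← integral_smul]
    refine integral_congr_ae ?_
    filter_upwards [gfun_smul p i c a] with x hx
    simp only [Pi.smul_apply, smul_eq_mul] at hx ⊢
    rw [hx]
    ring

variable (μ) in
/-- The continuous multilinear map packaging of `M`. -/
noncomputable def Mc (p : ℕ) [Fact (1 ≤ (p : ℝ≥0∞))] :
    ContinuousMultilinearMap ℝ (fun _ : Fin (p + 1) => Lp ℝ p μ × Lp ℝ ⊤ μ) ℝ :=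
  (M μ p).mkContinuous 1 fun v => by
    rw [one_mul]
    exact (key_aux p v).2

end ContDiffIntegralPowAux

/-- For a positive even integer `p = 2m`, the map `B(ξ, w) = ∫ ξ^p · w dμ` is infinitely
Fréchet differentiable on the product Banach space `L^p(μ; ℝ) × L^∞(μ; ℝ)`. -/
theorem contDiff_integral_pow_mul_weight {X : Type*} [MeasurableSpace X] (μ : Measure X)
    (m : ℕ) (hm : 0 < m) (p : ℕ) (hp : p = 2 * m) [Fact (1 ≤ (p : ℝ≥0∞))] :
    ContDiff ℝ (⊤ : ℕ∞)
      (fun ξw : Lp ℝ p μ × Lp ℝ ⊤ μ =>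
        ∫ x, (ξw.1 : X → ℝ) x ^ p * (ξw.2 : X → ℝ) x ∂μ) := by
  classical
  have hfun : (fun ξw : Lp ℝ p μ × Lp ℝ ⊤ μ =>
      ∫ x, (ξw.1 : X → ℝ) x ^ p * (ξw.2 : X → ℝ) x ∂μ) =
      fun ξw => ContDiffIntegralPowAux.Mc μ p (fun _ => ξw) := by
    funext ξw
    show _ = ∫ x, ∏ j, ContDiffIntegralPowAux.gfun μ p j ξw x ∂μ
    congr 1
    funext x
    rw [Fin.prod_univ_castSucc]
    have h1 : ∀ i : Fin p, ContDiffIntegralPowAux.gfun μ p i.castSucc ξw x =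
        (ξw.1 : X → ℝ) x := fun i => by
      simp [ContDiffIntegralPowAux.gfun, (Fin.castSucc_lt_last i).ne]
    have h2 : ContDiffIntegralPowAux.gfun μ p (Fin.last p) ξw x = (ξw.2 : X → ℝ) x := by
      simp [ContDiffIntegralPowAux.gfun]
    rw [h2]
    congr 1
    rw [Finset.prod_congr rfl fun i _ => h1 i, Finset.prod_const]
    simp
  rw [hfun]
  exact (ContDiffIntegralPowAux.Mc μ p).contDiff.comp
    (contDiff_pi.mpr fun _ => contDiff_id)
end

section
/- Let p be an even integer with p > 2 and let ν be a real number with 0 < ν < (p−2)/p. There exists a constant C > 0, depending only on p and ν, such that for every function f : ℂ → ℝ that is continuously differentiable on an open neighborhood of the closed unit disk D = {z ∈ ℂ : ‖z‖ ≤ 1} and satisfies f(0) = 0: ∫_D |f(z)|^p · ‖z‖^{−(νp + 2)} dA(z) ≤ C · (∫_D |f(z)|^p dA(z) + ∫_D ‖Df(z)‖^p dA(z)). -/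
/-!
Along each ray, `f z = ∫₀¹ Df(tz) z dt`, and Hölder's inequality against the weight `t ^ (d - 1)`
(`d = 2` is the real dimension) gives `|f z| ^ p ≲ ‖z‖ ^ p ∫₀¹ t ^ (d - 1) ‖Df(tz)‖ ^ p dt`; this
is where `p > d` enters. Integrating against `‖z‖ ^ (-(νp + d))` over the unit ball and substituting
`w = t z` turns the right side into `∫_{‖w‖ ≤ 1} ‖w‖ ^ α ‖Df w‖ ^ p ∫_{‖w‖}^1 t ^ (-1 - α) dt dw`
with `α = p - νp - d > 0`, and the inner integral is at most `‖w‖ ^ (-α) / α`.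
-/

open MeasureTheory Metric Set Module
open scoped ENNReal

theorem lintegral_Ioc_zero_one_ofReal_rpow {r : ℝ} (hr : -1 < r) :
    ∫⁻ t in Ioc (0 : ℝ) 1, ENNReal.ofReal t ^ r = ENNReal.ofReal (r + 1)⁻¹ := by
  have hint : IntegrableOn (fun t : ℝ => t ^ r) (Ioc 0 1) :=
    (intervalIntegrable_iff_integrableOn_Ioc_of_le zero_le_one).1
      (intervalIntegral.intervalIntegrable_rpow' hr)
  rw [setLIntegral_congr_fun measurableSet_Ioc fun t ht => ENNReal.ofReal_rpow_of_pos ht.1,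
    ← ofReal_integral_eq_lintegral_ofReal hint
      ((ae_restrict_mem measurableSet_Ioc).mono fun t ht => Real.rpow_nonneg ht.1.le r),
    ← intervalIntegral.integral_of_le zero_le_one, integral_rpow (Or.inl hr), Real.one_rpow,
    Real.zero_rpow (by linarith), sub_zero, one_div]

theorem lintegral_Ioi_ofReal_rpow_neg_one_sub {α s : ℝ} (hα : 0 < α) (hs : 0 < s) :
    ∫⁻ t in Ioi s, ENNReal.ofReal t ^ (-1 - α) =
      ENNReal.ofReal s ^ (-α) * ENNReal.ofReal α⁻¹ := by
  have ha : -1 - α < -1 := by linarith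
  rw [setLIntegral_congr_fun measurableSet_Ioi fun t ht =>
      ENNReal.ofReal_rpow_of_pos (hs.trans ht),
    ← ofReal_integral_eq_lintegral_ofReal (integrableOn_Ioi_rpow_of_lt ha hs)
      ((ae_restrict_mem measurableSet_Ioi).mono fun t ht => Real.rpow_nonneg (hs.trans ht).le _),
    integral_Ioi_rpow_of_lt ha hs, ENNReal.ofReal_rpow_of_pos hs,
    ← ENNReal.ofReal_mul (Real.rpow_nonneg hs.le _), show -1 - α + 1 = -α by ring,
    neg_div_neg_eq, div_eq_mul_inv]

theorem rpow_lintegral_Ioc_zero_one_le {P β : ℝ} (hP : 1 < P) (hβ : β < P - 1) {g : ℝ → ℝ≥0∞}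
    (hg : AEMeasurable g (volume.restrict (Ioc 0 1))) :
    (∫⁻ t in Ioc (0 : ℝ) 1, g t) ^ P ≤
      ENNReal.ofReal (((P - 1) / (P - 1 - β)) ^ (P - 1)) *
        ∫⁻ t in Ioc (0 : ℝ) 1, ENNReal.ofReal t ^ β * g t ^ P := by
  have hPq : P.HolderConjugate P.conjExponent := .conjExponent hP
  have hP1 : 0 < P - 1 := by linarith
  -- Hölder for the splitting `g = t ^ (-β / P) * (t ^ (β / P) * g)`
  set u : ℝ → ℝ≥0∞ := fun t => ENNReal.ofReal t ^ (-β / P)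
  set v : ℝ → ℝ≥0∞ := fun t => ENNReal.ofReal t ^ (β / P) * g t
  have huv : ∫⁻ t in Ioc (0 : ℝ) 1, g t = ∫⁻ t in Ioc (0 : ℝ) 1, (u * v) t := by
    refine setLIntegral_congr_fun measurableSet_Ioc fun t ht => ?_
    rw [Pi.mul_apply, ← mul_assoc, ← ENNReal.rpow_add _ _ (by simpa using ht.1)
      ENNReal.ofReal_ne_top, neg_div, neg_add_cancel, ENNReal.rpow_zero, one_mul]
  have hu : ∫⁻ t in Ioc (0 : ℝ) 1, u t ^ P.conjExponent =
      ENNReal.ofReal ((P - 1) / (P - 1 - β)) := by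
    have hexp : -β / P * P.conjExponent = -β / (P - 1) := by
      rw [Real.conjExponent]; field_simp
    simp_rw [u, ← ENNReal.rpow_mul, hexp]
    rw [lintegral_Ioc_zero_one_ofReal_rpow
        (by rw [neg_div, neg_lt_neg_iff, div_lt_one hP1]; linarith),
      show -β / (P - 1) + 1 = (P - 1 - β) / (P - 1) by field_simp; ring, inv_div]
  have hv : ∀ t, v t ^ P = ENNReal.ofReal t ^ β * g t ^ P := fun t => by
    rw [ENNReal.mul_rpow_of_nonneg _ _ (by linarith), ← ENNReal.rpow_mul,
      div_mul_cancel₀ _ (by linarith)]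
  have hu_meas : AEMeasurable u (volume.restrict (Ioc 0 1)) := by fun_prop
  calc (∫⁻ t in Ioc (0 : ℝ) 1, g t) ^ P
      ≤ ((∫⁻ t in Ioc (0 : ℝ) 1, u t ^ P.conjExponent) ^ (1 / P.conjExponent) *
          (∫⁻ t in Ioc (0 : ℝ) 1, v t ^ P) ^ (1 / P)) ^ P := by
        rw [huv]
        gcongr
        exact ENNReal.lintegral_mul_le_Lp_mul_Lq _ hPq.symm hu_meas (by fun_prop)
    _ = _ := by
        rw [ENNReal.mul_rpow_of_nonneg _ _ (by linarith), ← ENNReal.rpow_mul, ← ENNReal.rpow_mul,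
          one_div_mul_eq_div, hPq.div_conj_eq_sub_one, one_div_mul_cancel (by linarith),
          ENNReal.rpow_one, hu, ENNReal.ofReal_rpow_of_pos (by positivity)]
        simp_rw [hv]

section LayerCake

variable {E : Type*} [NormedAddCommGroup E] {α : ℝ} {G : E → ℝ≥0∞}

theorem lintegral_Ioc_rpow_mul_indicator_closedBall_le (hα : 0 < α) (w : E) :
    ∫⁻ t in Ioc (0 : ℝ) 1,
        ENNReal.ofReal t ^ (-1 - α) * (closedBall 0 t).indicator (fun w => ‖w‖ₑ ^ α * G w) w
      ≤ ENNReal.ofReal α⁻¹ * G w := by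
  rcases eq_or_ne w 0 with rfl | hw
  · classical
    simp [Set.indicator_apply, ENNReal.zero_rpow_of_pos hα]
  have hs : 0 < ‖w‖ := norm_pos_iff.2 hw
  have hind : ∀ t : ℝ, ENNReal.ofReal t ^ (-1 - α) *
        (closedBall 0 t).indicator (fun w => ‖w‖ₑ ^ α * G w) w =
      (Ici ‖w‖).indicator (fun t => ENNReal.ofReal t ^ (-1 - α) * (‖w‖ₑ ^ α * G w)) t := by
    intro t
    by_cases h : ‖w‖ ≤ t <;> simp [h]
  have hw_pow : ‖w‖ₑ ^ α ≠ 0 := by simp [hw]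
  calc _ ≤ ∫⁻ t, ENNReal.ofReal t ^ (-1 - α) *
        (closedBall 0 t).indicator (fun w => ‖w‖ₑ ^ α * G w) w := setLIntegral_le_lintegral _ _
    _ = ∫⁻ t in Ioi ‖w‖, ENNReal.ofReal t ^ (-1 - α) * (‖w‖ₑ ^ α * G w) := by
        simp_rw [hind]
        rw [lintegral_indicator measurableSet_Ici, setLIntegral_congr Ioi_ae_eq_Ici]
    _ = ENNReal.ofReal ‖w‖ ^ (-α) * ENNReal.ofReal α⁻¹ * (‖w‖ₑ ^ α * G w) := by
        rw [lintegral_mul_const _ (by fun_prop), lintegral_Ioi_ofReal_rpow_neg_one_sub hα hs]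
    _ = ENNReal.ofReal α⁻¹ * G w := by
        rw [ofReal_norm, ENNReal.rpow_neg, mul_comm _ (ENNReal.ofReal α⁻¹), mul_assoc,
          ← mul_assoc _ (‖w‖ₑ ^ α), ENNReal.inv_mul_cancel hw_pow (by simp [hα.le]), one_mul]

theorem lintegral_Ioc_rpow_mul_setLIntegral_closedBall_le [MeasurableSpace E] [BorelSpace E]
    (μ : Measure E) [SFinite μ] (hα : 0 < α) (hG : Measurable G) :
    ∫⁻ t in Ioc (0 : ℝ) 1,
        ENNReal.ofReal t ^ (-1 - α) * ∫⁻ w in closedBall 0 t, ‖w‖ₑ ^ α * G w ∂μ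
      ≤ ENNReal.ofReal α⁻¹ * ∫⁻ w in closedBall 0 1, G w ∂μ := by
  set K : E → ℝ≥0∞ := fun w => ‖w‖ₑ ^ α * G w
  have hK : Measurable K := by fun_prop
  have hmeas : Measurable fun q : ℝ × E =>
      ENNReal.ofReal q.1 ^ (-1 - α) * (closedBall 0 q.1).indicator K q.2 := by
    have hset : MeasurableSet {q : ℝ × E | ‖q.2‖ ≤ q.1} :=
      measurableSet_le (by fun_prop) (by fun_prop)
    have hind : (fun q : ℝ × E => (closedBall 0 q.1).indicator K q.2) =
        {q : ℝ × E | ‖q.2‖ ≤ q.1}.indicator (fun q => K q.2) := by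
      ext ⟨t, w⟩
      classical
      simp [Set.indicator_apply]
    exact (by fun_prop : Measurable fun q : ℝ × E => ENNReal.ofReal q.1 ^ (-1 - α)).mul
      (hind ▸ (hK.comp measurable_snd).indicator hset)
  calc _ = ∫⁻ t in Ioc (0 : ℝ) 1, ∫⁻ w in closedBall 0 1,
          ENNReal.ofReal t ^ (-1 - α) * (closedBall 0 t).indicator K w ∂μ := by
        refine setLIntegral_congr_fun measurableSet_Ioc fun t ht => ?_
        rw [lintegral_const_mul _ (hK.indicator measurableSet_closedBall),
          lintegral_indicator measurableSet_closedBall,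
          Measure.restrict_restrict measurableSet_closedBall,
          inter_eq_left.2 (closedBall_subset_closedBall ht.2)]
    _ = ∫⁻ w in closedBall 0 1, (∫⁻ t in Ioc (0 : ℝ) 1,
          ENNReal.ofReal t ^ (-1 - α) * (closedBall 0 t).indicator K w) ∂μ :=
        lintegral_lintegral_swap hmeas.aemeasurable
    _ ≤ ∫⁻ w in closedBall 0 1, ENNReal.ofReal α⁻¹ * G w ∂μ :=
        lintegral_mono fun w => lintegral_Ioc_rpow_mul_indicator_closedBall_le hα w
    _ = _ := lintegral_const_mul' _ _ ENNReal.ofReal_ne_top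

end LayerCake


section RayIntegral

variable {E F : Type*} [NormedAddCommGroup E] [NormedSpace ℝ E] [NormedAddCommGroup F]
  [NormedSpace ℝ F] {f : E → F} {U : Set E} {z : E}

theorem ContDiffOn.continuousOn_fderiv_smul (hU : IsOpen U) (hf : ContDiffOn ℝ 1 f U)
    (hz : ∀ t ∈ Icc (0 : ℝ) 1, t • z ∈ U) :
    ContinuousOn (fun t : ℝ => fderiv ℝ f (t • z)) (Icc 0 1) :=
  (hf.continuousOn_fderiv_of_isOpen hU le_rfl).comp (by fun_prop) hz

theorem enorm_le_lintegral_enorm_fderiv_smul_mul [CompleteSpace F] (hU : IsOpen U)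
    (hf : ContDiffOn ℝ 1 f U) (hf0 : f 0 = 0) (hz : ∀ t ∈ Icc (0 : ℝ) 1, t • z ∈ U) :
    ‖f z‖ₑ ≤ (∫⁻ t in Ioc (0 : ℝ) 1, ‖fderiv ℝ f (t • z)‖ₑ) * ‖z‖ₑ := by
  have hderiv : ∀ t ∈ uIcc (0 : ℝ) 1,
      HasDerivAt (fun s : ℝ => f (s • z)) (fderiv ℝ f (t • z) z) t := by
    intro t ht
    rw [uIcc_of_le zero_le_one] at ht
    have hdiff := (hf.differentiableOn one_ne_zero).differentiableAt (hU.mem_nhds (hz t ht))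
    exact hdiff.hasFDerivAt.comp_hasDerivAt t (by simpa using (hasDerivAt_id t).smul_const z)
  have hint : IntervalIntegrable (fun t : ℝ => fderiv ℝ f (t • z) z) volume 0 1 :=
    ((hf.continuousOn_fderiv_smul hU hz).clm_apply continuousOn_const).intervalIntegrable_of_Icc
      zero_le_one
  have hftc : ∫ t in Ioc (0 : ℝ) 1, fderiv ℝ f (t • z) z = f z := by
    rw [← intervalIntegral.integral_of_le zero_le_one,
      intervalIntegral.integral_eq_sub_of_hasDerivAt hderiv hint]
    simp [hf0]
  calc ‖f z‖ₑ = ‖∫ t in Ioc (0 : ℝ) 1, fderiv ℝ f (t • z) z‖ₑ := by rw [hftc]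
    _ ≤ ∫⁻ t in Ioc (0 : ℝ) 1, ‖fderiv ℝ f (t • z) z‖ₑ := enorm_integral_le_lintegral_enorm _
    _ ≤ ∫⁻ t in Ioc (0 : ℝ) 1, ‖fderiv ℝ f (t • z)‖ₑ * ‖z‖ₑ :=
        lintegral_mono fun t => (fderiv ℝ f (t • z)).le_opENorm z
    _ = _ := lintegral_mul_const' _ _ enorm_ne_top

end RayIntegral

section Haar

variable {E : Type*} [NormedAddCommGroup E] [NormedSpace ℝ E] [MeasurableSpace E] [BorelSpace E]
  [FiniteDimensional ℝ E] (μ : Measure E) [μ.IsAddHaarMeasure]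

theorem setLIntegral_closedBall_one_comp_smul {H : E → ℝ≥0∞} (hH : Measurable H) {t : ℝ}
    (ht : 0 < t) :
    ∫⁻ z in closedBall 0 1, H (t • z) ∂μ =
      ENNReal.ofReal t ^ (-(finrank ℝ E : ℝ)) * ∫⁻ w in closedBall 0 t, H w ∂μ := by
  have hind : (closedBall (0 : E) 1).indicator (fun z => H (t • z)) =
      fun z => (closedBall 0 t).indicator H (t • z) := by
    ext z
    have hmem : t • z ∈ closedBall (0 : E) t ↔ z ∈ closedBall 0 1 := by
      simp [norm_smul, abs_of_pos ht, ht]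
    by_cases hz : z ∈ closedBall (0 : E) 1 <;> simp [hz, hmem]
  rw [← lintegral_indicator measurableSet_closedBall, hind,
    ← lintegral_indicator measurableSet_closedBall,
    ← lintegral_map (hH.indicator measurableSet_closedBall) (measurable_const_smul t),
    Measure.map_addHaar_smul μ ht.ne', lintegral_smul_measure, abs_of_pos (by positivity),
    ENNReal.ofReal_inv_of_pos (by positivity), ENNReal.ofReal_pow ht.le, ENNReal.rpow_neg,
    ENNReal.rpow_natCast, smul_eq_mul]

theorem setLIntegral_closedBall_rpow_mul_lintegral_Ioc_le {α : ℝ} (hα : 0 < α) {G : E → ℝ≥0∞}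
    (hG : Measurable G) :
    ∫⁻ z in closedBall 0 1, ‖z‖ₑ ^ α *
        (∫⁻ t in Ioc (0 : ℝ) 1, ENNReal.ofReal t ^ ((finrank ℝ E : ℝ) - 1) * G (t • z)) ∂μ
      ≤ ENNReal.ofReal α⁻¹ * ∫⁻ w in closedBall 0 1, G w ∂μ := by
  set d : ℝ := (finrank ℝ E : ℝ)
  have hscale : ∀ t ∈ Ioc (0 : ℝ) 1,
      ∫⁻ z in closedBall 0 1, ‖z‖ₑ ^ α * (ENNReal.ofReal t ^ (d - 1) * G (t • z)) ∂μ =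
        ENNReal.ofReal t ^ (-1 - α) * ∫⁻ w in closedBall 0 t, ‖w‖ₑ ^ α * G w ∂μ := by
    intro t ht
    have ht0 : ENNReal.ofReal t ≠ 0 := by simpa using ht.1
    have hexp : ENNReal.ofReal t ^ (d - 1 - α) * ENNReal.ofReal t ^ α =
        ENNReal.ofReal t ^ (d - 1) := by
      rw [← ENNReal.rpow_add _ _ ht0 ENNReal.ofReal_ne_top, sub_add_cancel]
    have hpt : ∀ z : E, ‖z‖ₑ ^ α * (ENNReal.ofReal t ^ (d - 1) * G (t • z)) =
        ENNReal.ofReal t ^ (d - 1 - α) * (‖t • z‖ₑ ^ α * G (t • z)) := fun z => by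
      rw [enorm_smul, Real.enorm_of_nonneg ht.1.le, ENNReal.mul_rpow_of_nonneg _ _ hα.le, ← hexp]
      ring
    simp_rw [hpt]
    rw [lintegral_const_mul _ (by fun_prop),
      setLIntegral_closedBall_one_comp_smul μ (H := fun w => ‖w‖ₑ ^ α * G w) (by fun_prop) ht.1,
      ← mul_assoc, ← ENNReal.rpow_add _ _ ht0 ENNReal.ofReal_ne_top]
    congr 2
    simp only [d]
    ring
  calc _ = ∫⁻ z in closedBall 0 1, (∫⁻ t in Ioc (0 : ℝ) 1,
          ‖z‖ₑ ^ α * (ENNReal.ofReal t ^ (d - 1) * G (t • z))) ∂μ :=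
        lintegral_congr fun z => (lintegral_const_mul' _ _ (by simp [hα.le])).symm
    _ = ∫⁻ t in Ioc (0 : ℝ) 1, ∫⁻ z in closedBall 0 1,
          ‖z‖ₑ ^ α * (ENNReal.ofReal t ^ (d - 1) * G (t • z)) ∂μ :=
        lintegral_lintegral_swap (by fun_prop)
    _ = ∫⁻ t in Ioc (0 : ℝ) 1,
          ENNReal.ofReal t ^ (-1 - α) * ∫⁻ w in closedBall 0 t, ‖w‖ₑ ^ α * G w ∂μ :=
        setLIntegral_congr_fun measurableSet_Ioc hscale
    _ ≤ _ := lintegral_Ioc_rpow_mul_setLIntegral_closedBall_le μ hα hG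

end Haar

theorem ContinuousOn.setLIntegral_enorm_pow_eq_ofReal {X F : Type*} [TopologicalSpace X]
    [T2Space X] [MeasurableSpace X] [OpensMeasurableSpace X] [NormedAddCommGroup F]
    {μ : Measure X} [IsFiniteMeasureOnCompacts μ] {g : X → F} {K : Set X} (hg : ContinuousOn g K)
    (hK : IsCompact K) (n : ℕ) :
    ∫⁻ x in K, ‖g x‖ₑ ^ n ∂μ = ENNReal.ofReal (∫ x in K, ‖g x‖ ^ n ∂μ) := by
  have hint : IntegrableOn (fun x => ‖g x‖ ^ n) K μ := (hg.norm.pow n).integrableOn_compact hK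
  rw [ofReal_integral_eq_lintegral_ofReal hint (.of_forall fun x => by positivity)]
  simp_rw [ENNReal.ofReal_pow (norm_nonneg _), ofReal_norm]

section Hardy

variable {E F : Type*} [NormedAddCommGroup E] [NormedSpace ℝ E] [NormedAddCommGroup F]
  [NormedSpace ℝ F] [CompleteSpace F] {f : E → F} {U : Set E}

theorem enorm_rpow_le_mul_lintegral_rpow_fderiv_smul (hU : IsOpen U) (hf : ContDiffOn ℝ 1 f U)
    (hf0 : f 0 = 0) {z : E} (hz : ∀ t ∈ Icc (0 : ℝ) 1, t • z ∈ U) {P β : ℝ} (hP : 1 < P)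
    (hβ : β < P - 1) :
    ‖f z‖ₑ ^ P ≤ ENNReal.ofReal (((P - 1) / (P - 1 - β)) ^ (P - 1)) * ‖z‖ₑ ^ P *
      ∫⁻ t in Ioc (0 : ℝ) 1, ENNReal.ofReal t ^ β * ‖fderiv ℝ f (t • z)‖ₑ ^ P := by
  have hg : AEMeasurable (fun t : ℝ => ‖fderiv ℝ f (t • z)‖ₑ) (volume.restrict (Ioc 0 1)) :=
    ((hf.continuousOn_fderiv_smul hU hz).mono Ioc_subset_Icc_self).enorm.aemeasurable
      measurableSet_Ioc
  calc ‖f z‖ₑ ^ P ≤ ((∫⁻ t in Ioc (0 : ℝ) 1, ‖fderiv ℝ f (t • z)‖ₑ) * ‖z‖ₑ) ^ P :=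
        ENNReal.rpow_le_rpow (enorm_le_lintegral_enorm_fderiv_smul_mul hU hf hf0 hz) (by linarith)
    _ = (∫⁻ t in Ioc (0 : ℝ) 1, ‖fderiv ℝ f (t • z)‖ₑ) ^ P * ‖z‖ₑ ^ P :=
        ENNReal.mul_rpow_of_nonneg _ _ (by linarith)
    _ ≤ ENNReal.ofReal (((P - 1) / (P - 1 - β)) ^ (P - 1)) *
          (∫⁻ t in Ioc (0 : ℝ) 1, ENNReal.ofReal t ^ β * ‖fderiv ℝ f (t • z)‖ₑ ^ P) *
            ‖z‖ₑ ^ P := by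
        gcongr
        exact rpow_lintegral_Ioc_zero_one_le hP hβ hg
    _ = _ := mul_right_comm _ _ _

theorem setLIntegral_closedBall_enorm_rpow_mul_le [MeasurableSpace E] [BorelSpace E]
    [FiniteDimensional ℝ E] [Nontrivial E] (μ : Measure E) [μ.IsAddHaarMeasure] {P ν : ℝ}
    (hP : (finrank ℝ E : ℝ) < P) (hν : ν < (P - finrank ℝ E) / P) (hU : IsOpen U)
    (hBU : closedBall 0 1 ⊆ U) (hf : ContDiffOn ℝ 1 f U) (hf0 : f 0 = 0) :
    ∫⁻ z in closedBall 0 1, ‖f z‖ₑ ^ P * ‖z‖ₑ ^ (-(ν * P + finrank ℝ E)) ∂μ ≤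
      ENNReal.ofReal (((P - 1) / (P - finrank ℝ E)) ^ (P - 1) / (P - ν * P - finrank ℝ E)) *
        ∫⁻ z in closedBall 0 1, ‖fderiv ℝ f z‖ₑ ^ P ∂μ := by
  set d : ℝ := (finrank ℝ E : ℝ)
  have hd : 1 ≤ d := Nat.one_le_cast.2 finrank_pos
  have hP0 : 0 < P := by linarith
  set α := P - ν * P - d with hα_def
  have hα : 0 < α := by linarith [(lt_div_iff₀ hP0).1 hν]
  set b := ((P - 1) / (P - d)) ^ (P - 1)
  have hpt : ∀ z ∈ closedBall (0 : E) 1, ‖f z‖ₑ ^ P * ‖z‖ₑ ^ (-(ν * P + d)) ≤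
      ENNReal.ofReal b * (‖z‖ₑ ^ α *
        ∫⁻ t in Ioc (0 : ℝ) 1, ENNReal.ofReal t ^ (d - 1) * ‖fderiv ℝ f (t • z)‖ₑ ^ P) := by
    intro z hz
    rcases eq_or_ne z 0 with rfl | hz0
    · simp [hf0, ENNReal.zero_rpow_of_pos hP0]
    have hray : ∀ t ∈ Icc (0 : ℝ) 1, t • z ∈ U := fun t ht =>
      hBU ((convex_closedBall 0 1).smul_mem_of_zero_mem (mem_closedBall_self zero_le_one) hz ht)
    have key := enorm_rpow_le_mul_lintegral_rpow_fderiv_smul hU hf hf0 hray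
      (by linarith : 1 < P) (by linarith : d - 1 < P - 1)
    rw [show P - 1 - (d - 1) = P - d by ring] at key
    have hzα : ‖z‖ₑ ^ P * ‖z‖ₑ ^ (-(ν * P + d)) = ‖z‖ₑ ^ α := by
      rw [← ENNReal.rpow_add _ _ (by simpa using hz0) enorm_ne_top, hα_def]
      ring_nf
    calc ‖f z‖ₑ ^ P * ‖z‖ₑ ^ (-(ν * P + d))
        ≤ ENNReal.ofReal b * ‖z‖ₑ ^ P * (∫⁻ t in Ioc (0 : ℝ) 1,
            ENNReal.ofReal t ^ (d - 1) * ‖fderiv ℝ f (t • z)‖ₑ ^ P) *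
              ‖z‖ₑ ^ (-(ν * P + d)) := by
          gcongr
      _ = _ := by rw [← hzα]; ring
  calc _ ≤ ∫⁻ z in closedBall 0 1, ENNReal.ofReal b * (‖z‖ₑ ^ α *
          ∫⁻ t in Ioc (0 : ℝ) 1, ENNReal.ofReal t ^ (d - 1) * ‖fderiv ℝ f (t • z)‖ₑ ^ P) ∂μ :=
        setLIntegral_mono' measurableSet_closedBall hpt
    _ = ENNReal.ofReal b * ∫⁻ z in closedBall 0 1, ‖z‖ₑ ^ α *
          (∫⁻ t in Ioc (0 : ℝ) 1, ENNReal.ofReal t ^ (d - 1) * ‖fderiv ℝ f (t • z)‖ₑ ^ P) ∂μ :=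
        lintegral_const_mul' _ _ ENNReal.ofReal_ne_top
    _ ≤ ENNReal.ofReal b *
          (ENNReal.ofReal α⁻¹ * ∫⁻ z in closedBall 0 1, ‖fderiv ℝ f z‖ₑ ^ P ∂μ) := by
        gcongr
        exact setLIntegral_closedBall_rpow_mul_lintegral_Ioc_le μ hα (by fun_prop)
    _ = _ := by
        rw [← mul_assoc, ← ENNReal.ofReal_mul (Real.rpow_nonneg (by bound) _),
          ← div_eq_mul_inv]

end Hardy

theorem weighted_disk_estimate_general (p : ℕ) (hp : 2 < p)
    (ν : ℝ) (hν' : ν < ((p : ℝ) - 2) / p) :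
    ∃ C > 0, ∀ (f : ℂ → ℝ) (U : Set ℂ), IsOpen U → closedBall (0 : ℂ) 1 ⊆ U →
      ContDiffOn ℝ 1 f U → f 0 = 0 →
      (∫⁻ z in closedBall (0 : ℂ) 1,
          ENNReal.ofReal (|f z| ^ p * ‖z‖ ^ (-(ν * p + 2)))) ≤
        ENNReal.ofReal
          (C * ((∫ z in closedBall (0 : ℂ) 1, |f z| ^ p) +
            ∫ z in closedBall (0 : ℂ) 1, ‖fderiv ℝ f z‖ ^ p)) := by
  have hp' : (2 : ℝ) < p := by exact_mod_cast hp
  have hd : (finrank ℝ ℂ : ℝ) = 2 := by simp [Complex.finrank_real_complex]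
  have hα : 0 < (p : ℝ) - ν * p - 2 := by
    linarith [(lt_div_iff₀ (by linarith : (0 : ℝ) < p)).1 hν']
  set C := (((p : ℝ) - 1) / (p - 2)) ^ ((p : ℝ) - 1) / (p - ν * p - 2)
  have hC : 0 < C := div_pos (Real.rpow_pos_of_pos (div_pos (by linarith) (by linarith)) _) hα
  refine ⟨C, hC, fun f U hU hBU hf hf0 => ?_⟩
  have hardy := setLIntegral_closedBall_enorm_rpow_mul_le volume (hd ▸ hp') (hd ▸ hν') hU hBU hf hf0
  simp only [hd, ENNReal.rpow_natCast, ((hf.continuousOn_fderiv_of_isOpen hU le_rfl).mono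
    hBU).setLIntegral_enorm_pow_eq_ofReal (isCompact_closedBall 0 1)] at hardy
  -- at `z = 0` the real power `‖z‖ ^ (-(ν * p + 2))` is a junk value, but `f 0 = 0`
  have hweight : ∀ z, ENNReal.ofReal (|f z| ^ p * ‖z‖ ^ (-(ν * p + 2))) ≤
      ‖f z‖ₑ ^ p * ‖z‖ₑ ^ (-(ν * p + 2)) := by
    intro z
    rcases eq_or_ne z 0 with rfl | hz
    · simp [hf0, zero_pow (by omega : p ≠ 0)]
    rw [ENNReal.ofReal_mul (by positivity), ENNReal.ofReal_pow (abs_nonneg _),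
      ← ENNReal.ofReal_rpow_of_pos (norm_pos_iff.2 hz), ofReal_norm, ← Real.enorm_eq_ofReal_abs]
  calc _ ≤ _ := lintegral_mono hweight
    _ ≤ _ := hardy
    _ ≤ _ := by
        rw [← ENNReal.ofReal_mul hC.le]
        gcongr
        exact le_add_of_nonneg_left (integral_nonneg fun z => by positivity)

/-- Weighted estimate on the disk (lowest derivative term): for an even integer `p > 2` and
`0 < ν < (p−2)/p`, there is `C = C(p, ν) > 0` such that for every `f : ℂ → ℝ` continuously
differentiable on an open neighborhood of the closed unit disk `D` with `f 0 = 0`,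
`∫_D |f|^p ‖z‖^{−(νp+2)} dA ≤ C (∫_D |f|^p dA + ∫_D ‖Df‖^p dA)`. -/
theorem weighted_disk_estimate (p : ℕ) (hp : 2 < p) (hpeven : Even p)
    (ν : ℝ) (hν : 0 < ν) (hν' : ν < ((p : ℝ) - 2) / p) :
    ∃ C > 0, ∀ (f : ℂ → ℝ) (U : Set ℂ), IsOpen U → closedBall (0 : ℂ) 1 ⊆ U →
      ContDiffOn ℝ 1 f U → f 0 = 0 →
      (∫⁻ z in closedBall (0 : ℂ) 1,
          ENNReal.ofReal (|f z| ^ p * ‖z‖ ^ (-(ν * p + 2)))) ≤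
        ENNReal.ofReal
          (C * ((∫ z in closedBall (0 : ℂ) 1, |f z| ^ p) +
            ∫ z in closedBall (0 : ℂ) 1, ‖fderiv ℝ f z‖ ^ p)) :=
  weighted_disk_estimate_general p hp ν hν'
end

section
/- Let p > 2 and ν > 0 be real numbers. There exists a constant C > 0, depending only on p and ν, with the following property. Let g : ℝ² → ℝ be continuously differentiable with g(s, t+1) = g(s, t) for all (s, t) ∈ ℝ², and suppose M := (∫_{[0,∞) × [0,1]} e^{pνs} · (|g(s,t)|^p + ‖Dg(s,t)‖^p) ds dt)^{1/p} < ∞. Then for all s ≥ 0 and all t ∈ ℝ: |g(s, t)| ≤ C · e^{−νs} · M; in particular, sup_{t} |g(s,t)| → 0 as s → ∞. -/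
/-!
A Morrey estimate on unit squares, combined with the exponential weight. For `g` of class `C¹`
on a compact convex `Q ∋ x`, integrate `g y - g x = ∫₀¹ Dg(x + θ(y - x))(y - x) dθ` over
`y ∈ Q` and swap the integrals: the inner integrals run over the homothetic images
`x + θ(Q - x) ⊆ Q`, so the Jacobian `θⁿ` and Hölder bound them by `θ^(-n/p) ‖Dg‖_{L^p(Q)}`,
which is integrable on `(0, 1]` exactly when `p > n`. On the square `[s, s+1] × [t, t+1]`
(`n = 2`) this gives `|g(s,t)| ≤ (1 + p/(p-2)) ‖g‖_{W^{1,p}}`; periodicity in `t` moves the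
square into the strip `[0, ∞) × [0, 1]`, where the weight `e^{pνs'} ≥ e^{pνs}` produces the
factor `e^{-νs}`.
-/

open MeasureTheory Set Module Filter Topology

section Holder

variable {α : Type*} [MeasurableSpace α] {μ : Measure α}

theorem MeasureTheory.setIntegral_le_rpow_mul_measureReal {s : Set α} {f : α → ℝ} {p : ℝ}
    (hp : 1 < p) (hs : μ s ≠ ⊤) (hf0 : 0 ≤ᵐ[μ.restrict s] f)
    (hf : MemLp f (ENNReal.ofReal p) (μ.restrict s)) :
    ∫ x in s, f x ∂μ ≤ (∫ x in s, f x ^ p ∂μ) ^ (1 / p) * μ.real s ^ (1 - 1 / p) := by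
  have hpq := Real.HolderConjugate.conjExponent hp
  have : IsFiniteMeasure (μ.restrict s) := isFiniteMeasure_restrict.mpr hs
  have h := integral_mul_le_Lp_mul_Lq_of_nonneg hpq hf0 (.of_forall fun _ => zero_le_one)
    hf (memLp_const 1)
  rw [one_div (Real.conjExponent p), ← hpq.one_sub_inv] at h
  simpa [Real.one_rpow, measureReal_def] using h

theorem IsCompact.memLp_restrict [TopologicalSpace α] [OpensMeasurableSpace α]
    [IsFiniteMeasureOnCompacts μ] {E : Type*} [NormedAddCommGroup E] {K : Set α} {f : α → E}
    (hK : IsCompact K) (hKm : MeasurableSet K) (hf : ContinuousOn f K) (p : ENNReal) :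
    MemLp f p (μ.restrict K) := by
  have : IsFiniteMeasure (μ.restrict K) := isFiniteMeasure_restrict.mpr hK.measure_lt_top.ne
  obtain ⟨C, hC⟩ := hK.exists_bound_of_continuousOn hf
  exact .of_bound (hf.aestronglyMeasurable_of_isCompact hK hKm) C
    ((ae_restrict_iff' hKm).2 (.of_forall hC))

end Holder

section Segment

variable {E F : Type*} [NormedAddCommGroup E] [NormedSpace ℝ E] [NormedAddCommGroup F]
  [NormedSpace ℝ F]

theorem norm_sub_le_mul_integral_norm_fderiv_segment {g : E → F} (hg : ContDiff ℝ 1 g)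
    (x y : E) :
    ‖g y - g x‖ ≤ ‖y - x‖ * ∫ θ in (0 : ℝ)..1, ‖fderiv ℝ g (x + θ • (y - x))‖ := by
  have hpath : ∀ θ : ℝ, HasDerivAt (fun τ : ℝ => g (x + τ • (y - x)))
      (fderiv ℝ g (x + θ • (y - x)) (y - x)) θ := fun θ =>
    (hg.differentiable one_ne_zero _).hasFDerivAt.comp_hasDerivAt θ
      (by simpa using ((hasDerivAt_id θ).smul_const (y - x)).const_add x)
  have hD : Continuous fun θ : ℝ => ‖fderiv ℝ g (x + θ • (y - x))‖ :=
    ((hg.continuous_fderiv one_ne_zero).comp (by fun_prop)).norm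
  rw [← intervalIntegral.integral_const_mul]
  simpa using norm_sub_le_integral_of_norm_deriv_le_of_le zero_le_one
    (fun θ _ => (hpath θ).continuousAt.continuousWithinAt)
    (fun θ _ => (hpath θ).differentiableAt.differentiableWithinAt)
    (.of_forall fun θ _ => by
      rw [(hpath θ).deriv, mul_comm]; exact ContinuousLinearMap.le_opNorm _ _)
    ((continuous_const.mul hD).intervalIntegrable 0 1)

end Segment

section Morrey

variable {E F : Type*} [NormedAddCommGroup E] [NormedSpace ℝ E] [FiniteDimensional ℝ E]
  [MeasurableSpace E] [BorelSpace E] (μ : Measure E) [μ.IsAddHaarMeasure]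
  [NormedAddCommGroup F] [NormedSpace ℝ F]

theorem pow_finrank_mul_setIntegral_comp_homothety_le {Q : Set E} (hQm : MeasurableSet Q)
    (hQ : Convex ℝ Q) {x : E} (hx : x ∈ Q) {θ : ℝ} (hθ0 : 0 < θ) (hθ1 : θ ≤ 1) {h : E → ℝ}
    (h0 : 0 ≤ᵐ[μ.restrict Q] h) (hint : IntegrableOn h Q μ) :
    θ ^ finrank ℝ E * ∫ y in Q, h (x + θ • (y - x)) ∂μ ≤ ∫ y in Q, h y ∂μ := by
  have hφ' : ∀ y ∈ Q, HasFDerivWithinAt (fun y : E => x + θ • (y - x))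
      (θ • ContinuousLinearMap.id ℝ E) Q y := fun y _ =>
    ((((hasFDerivAt_id y).sub_const x).const_smul θ).const_add x).hasFDerivWithinAt
  have hφinj : InjOn (fun y : E => x + θ • (y - x)) Q := fun a _ b _ hab => by
    simpa using smul_right_injective E hθ0.ne' (add_left_cancel hab)
  have hdet : (θ • ContinuousLinearMap.id ℝ E).det = θ ^ finrank ℝ E := by
    simp [ContinuousLinearMap.det, LinearMap.det_smul]
  have himage : (fun y : E => x + θ • (y - x)) '' Q ⊆ Q := by
    rintro _ ⟨y, hy, rfl⟩
    exact hQ.add_smul_sub_mem hx hy ⟨hθ0.le, hθ1⟩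
  calc θ ^ finrank ℝ E * ∫ y in Q, h (x + θ • (y - x)) ∂μ
      = ∫ z in (fun y : E => x + θ • (y - x)) '' Q, h z ∂μ := by
        rw [integral_image_eq_integral_abs_det_fderiv_smul μ hQm hφ' hφinj, hdet,
          abs_of_pos (by positivity)]
        simp_rw [smul_eq_mul, integral_const_mul]
    _ ≤ ∫ y in Q, h y ∂μ := setIntegral_mono_set hint h0 himage.eventuallyLE

theorem setIntegral_comp_homothety_le_rpow {Q : Set E} (hQc : IsCompact Q) (hQ : Convex ℝ Q)
    {x : E} (hx : x ∈ Q) {θ : ℝ} (hθ0 : 0 < θ) (hθ1 : θ ≤ 1) {p : ℝ} (hp : 1 < p)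
    {h : E → ℝ} (hc : Continuous h) (h0 : ∀ y, 0 ≤ h y) :
    ∫ y in Q, h (x + θ • (y - x)) ∂μ ≤ θ ^ (-(finrank ℝ E : ℝ) / p) *
      (μ.real Q ^ (1 - 1 / p) * (∫ y in Q, h y ^ p ∂μ) ^ (1 / p)) := by
  have hQm := hQc.measurableSet
  set I := ∫ y in Q, h y ^ p ∂μ
  set J := ∫ y in Q, h (x + θ • (y - x)) ^ p ∂μ
  have hI0 : 0 ≤ I := setIntegral_nonneg hQm fun y _ => Real.rpow_nonneg (h0 _) p
  have hJ0 : 0 ≤ J := setIntegral_nonneg hQm fun y _ => Real.rpow_nonneg (h0 _) p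
  have hJ : J ≤ θ ^ (-(finrank ℝ E : ℝ)) * I := by
    rw [Real.rpow_neg hθ0.le, Real.rpow_natCast, ← div_eq_inv_mul, le_div_iff₀' (by positivity)]
    exact pow_finrank_mul_setIntegral_comp_homothety_le μ hQm hQ hx hθ0 hθ1
      (.of_forall fun y => Real.rpow_nonneg (h0 y) p)
      ((hc.rpow_const fun _ => .inr (by linarith)).continuousOn.integrableOn_compact hQc)
  calc ∫ y in Q, h (x + θ • (y - x)) ∂μ ≤ J ^ (1 / p) * μ.real Q ^ (1 - 1 / p) :=
        setIntegral_le_rpow_mul_measureReal hp hQc.measure_lt_top.ne (.of_forall fun y => h0 _)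
          (hQc.memLp_restrict hQm (hc.comp (by fun_prop)).continuousOn _)
    _ ≤ (θ ^ (-(finrank ℝ E : ℝ)) * I) ^ (1 / p) * μ.real Q ^ (1 - 1 / p) := by
        gcongr
    _ = _ := by
        rw [Real.mul_rpow (by positivity) hI0, ← Real.rpow_mul hθ0.le, mul_one_div]
        ring

theorem Convex.setIntegral_norm_sub_le {Q : Set E} (hQc : IsCompact Q) (hQ : Convex ℝ Q)
    {x : E} (hx : x ∈ Q) {d : ℝ} (hd : ∀ y ∈ Q, ‖y - x‖ ≤ d) {p : ℝ} (hp : 1 < p)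
    (hpn : (finrank ℝ E : ℝ) < p) {g : E → F} (hg : ContDiff ℝ 1 g) :
    ∫ y in Q, ‖g y - g x‖ ∂μ ≤ d * (p / (p - finrank ℝ E)) *
      (μ.real Q ^ (1 - 1 / p) * (∫ y in Q, ‖fderiv ℝ g y‖ ^ p ∂μ) ^ (1 / p)) := by
  set n : ℝ := (finrank ℝ E : ℝ)
  set B := μ.real Q ^ (1 - 1 / p) * (∫ y in Q, ‖fderiv ℝ g y‖ ^ p ∂μ) ^ (1 / p)
  have hQm := hQc.measurableSet
  have hDg := hg.continuous_fderiv one_ne_zero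
  set Φ : E → ℝ → ℝ := fun y θ => ‖fderiv ℝ g (x + θ • (y - x))‖
  have hΦ : Integrable (Function.uncurry Φ) ((μ.restrict Q).prod (volume.restrict (Ioc 0 1))) := by
    rw [Measure.prod_restrict]
    refine (ContinuousOn.integrableOn_compact (hQc.prod isCompact_Icc) ?_).mono_set
      (prod_mono subset_rfl Ioc_subset_Icc_self)
    exact (hDg.comp (by fun_prop)).norm.continuousOn
  have hexp : -1 < -n / p := by
    rw [neg_div, neg_lt_neg_iff, div_lt_one (by linarith)]; exact hpn
  have hrpow : ∫ θ in Ioc (0 : ℝ) 1, θ ^ (-n / p) = p / (p - n) := by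
    rw [← intervalIntegral.integral_of_le zero_le_one, integral_rpow (Or.inl hexp),
      Real.one_rpow, Real.zero_rpow (by linarith)]
    field_simp
    ring
  have hd0 : 0 ≤ d := by simpa using hd x hx
  calc ∫ y in Q, ‖g y - g x‖ ∂μ
      ≤ ∫ y in Q, d * (∫ θ in Ioc (0 : ℝ) 1, Φ y θ) ∂μ := by
        refine setIntegral_mono_on ((hg.continuous.sub continuous_const).norm.continuousOn
          |>.integrableOn_compact hQc) (hΦ.integral_prod_left.const_mul d) hQm fun y hy => ?_
        rw [← intervalIntegral.integral_of_le zero_le_one]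
        have hΦ0 : 0 ≤ ∫ θ in (0 : ℝ)..1, Φ y θ :=
          intervalIntegral.integral_nonneg zero_le_one fun _ _ => norm_nonneg _
        exact (norm_sub_le_mul_integral_norm_fderiv_segment hg x y).trans
          (mul_le_mul_of_nonneg_right (hd y hy) hΦ0)
    _ = d * ∫ θ in Ioc (0 : ℝ) 1, ∫ y in Q, Φ y θ ∂μ := by
        rw [integral_const_mul, integral_integral_swap hΦ]
    _ ≤ d * ∫ θ in Ioc (0 : ℝ) 1, θ ^ (-n / p) * B := by
        refine mul_le_mul_of_nonneg_left (setIntegral_mono_on hΦ.swap.integral_prod_left ?_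
          measurableSet_Ioc fun θ hθ => ?_) hd0
        · exact (intervalIntegrable_iff_integrableOn_Ioc_of_le zero_le_one).1
            (intervalIntegral.intervalIntegrable_rpow' hexp) |>.mul_const B
        · exact setIntegral_comp_homothety_le_rpow μ hQc hQ hx hθ.1 hθ.2 hp hDg.norm
            fun _ => norm_nonneg _
    _ = d * (p / (p - n)) * B := by
        rw [integral_mul_const, hrpow, mul_assoc]


theorem Convex.measureReal_mul_norm_le {Q : Set E} (hQc : IsCompact Q) (hQ : Convex ℝ Q)
    {x : E} (hx : x ∈ Q) {d : ℝ} (hd : ∀ y ∈ Q, ‖y - x‖ ≤ d) {p : ℝ} (hp : 1 < p)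
    (hpn : (finrank ℝ E : ℝ) < p) {g : E → F} (hg : ContDiff ℝ 1 g) :
    μ.real Q * ‖g x‖ ≤ μ.real Q ^ (1 - 1 / p) * (∫ y in Q, ‖g y‖ ^ p ∂μ) ^ (1 / p) +
      d * (p / (p - finrank ℝ E)) *
        (μ.real Q ^ (1 - 1 / p) * (∫ y in Q, ‖fderiv ℝ g y‖ ^ p ∂μ) ^ (1 / p)) := by
  have hQm := hQc.measurableSet
  have hgn : Continuous fun y => ‖g y‖ := hg.continuous.norm
  have hgsub : Continuous fun y => ‖g y - g x‖ := (hg.continuous.sub continuous_const).norm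
  calc μ.real Q * ‖g x‖ = ∫ _ in Q, ‖g x‖ ∂μ := by rw [setIntegral_const, smul_eq_mul]
    _ ≤ ∫ y in Q, (‖g y‖ + ‖g y - g x‖) ∂μ :=
        setIntegral_mono_on (integrableOn_const hQc.measure_lt_top.ne)
          ((hgn.add hgsub).continuousOn.integrableOn_compact hQc) hQm
          fun y _ => norm_le_norm_add_norm_sub _ _
    _ = ∫ y in Q, ‖g y‖ ∂μ + ∫ y in Q, ‖g y - g x‖ ∂μ :=
        integral_add (hgn.continuousOn.integrableOn_compact hQc)
          (hgsub.continuousOn.integrableOn_compact hQc)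
    _ ≤ _ := by
        refine add_le_add ?_ (hQ.setIntegral_norm_sub_le μ hQc hx hd hp hpn hg)
        rw [mul_comm]
        exact setIntegral_le_rpow_mul_measureReal hp hQc.measure_lt_top.ne
          (.of_forall fun _ => norm_nonneg _) (hQc.memLp_restrict hQm hgn.continuousOn _)

end Morrey

theorem abs_le_mul_integral_rpow_unitSquare {p : ℝ} (hp : 2 < p) {g : ℝ × ℝ → ℝ}
    (hg : ContDiff ℝ 1 g) (x : ℝ × ℝ) :
    |g x| ≤ (1 + p / (p - 2)) * (∫ y in Icc x.1 (x.1 + 1) ×ˢ Icc x.2 (x.2 + 1),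
      (|g y| ^ p + ‖fderiv ℝ g y‖ ^ p)) ^ (1 / p) := by
  set Q := Icc x.1 (x.1 + 1) ×ˢ Icc x.2 (x.2 + 1)
  have hQc : IsCompact Q := isCompact_Icc.prod isCompact_Icc
  have hx : x ∈ Q := ⟨⟨le_rfl, by linarith⟩, ⟨le_rfl, by linarith⟩⟩
  have hvol : volume.real Q = 1 := by
    rw [measureReal_def, Measure.volume_eq_prod, Measure.prod_prod]
    simp
  have hd : ∀ y ∈ Q, ‖y - x‖ ≤ 1 := fun y ⟨⟨h₁, h₂⟩, ⟨h₃, h₄⟩⟩ => by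
    rw [Prod.norm_def, max_le_iff, Real.norm_eq_abs, Real.norm_eq_abs, abs_le, abs_le]
    simp only [Prod.fst_sub, Prod.snd_sub]
    refine ⟨⟨?_, ?_⟩, ?_, ?_⟩ <;> linarith
  have hrank : (finrank ℝ (ℝ × ℝ) : ℝ) = 2 := by simp
  have key := (convex_Icc x.1 (x.1 + 1)).prod (convex_Icc x.2 (x.2 + 1))
    |>.measureReal_mul_norm_le volume hQc hx hd (p := p) (by linarith) (by rw [hrank]; exact hp) hg
  simp only [hvol, hrank, Real.one_rpow, one_mul, Real.norm_eq_abs] at key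
  set A := ∫ y in Q, |g y| ^ p
  set B := ∫ y in Q, ‖fderiv ℝ g y‖ ^ p
  have hA : 0 ≤ A := setIntegral_nonneg hQc.measurableSet fun y _ => by positivity
  have hB : 0 ≤ B := setIntegral_nonneg hQc.measurableSet fun y _ => by positivity
  have hDg := hg.continuous_fderiv one_ne_zero
  have hp0 : 0 ≤ p := by linarith
  rw [integral_add
    ((hg.continuous.abs.rpow_const fun _ => .inr hp0).continuousOn.integrableOn_compact hQc)
    ((hDg.norm.rpow_const fun _ => .inr hp0).continuousOn.integrableOn_compact hQc)]
  have hp' : 0 ≤ 1 / p := by positivity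
  have hc : 0 ≤ p / (p - 2) := div_nonneg hp0 (by linarith)
  calc |g x| ≤ A ^ (1 / p) + p / (p - 2) * B ^ (1 / p) := key
    _ ≤ (A + B) ^ (1 / p) + p / (p - 2) * (A + B) ^ (1 / p) :=
      add_le_add (Real.rpow_le_rpow hA (by linarith) hp')
        (mul_le_mul_of_nonneg_left (Real.rpow_le_rpow hB (by linarith) hp') hc)
    _ = (1 + p / (p - 2)) * (A + B) ^ (1 / p) := by ring

theorem Function.Periodic.fderiv {𝕜 E F : Type*} [NontriviallyNormedField 𝕜]
    [NormedAddCommGroup E] [NormedSpace 𝕜 E] [NormedAddCommGroup F] [NormedSpace 𝕜 F]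
    {g : E → F} {v : E} (h : Function.Periodic g v) : Function.Periodic (fderiv 𝕜 g) v :=
  fun z => by rw [← fderiv_comp_add_right, show (fun x => g (x + v)) = g from funext h]

theorem Function.Periodic.setIntegral_Icc_prod_Icc_add {H : ℝ × ℝ → ℝ} (hH : Continuous H)
    {T : ℝ} (hT : 0 ≤ T) (hper : Function.Periodic H (0, T)) (a b t : ℝ) :
    ∫ y in Icc a b ×ˢ Icc t (t + T), H y = ∫ y in Icc a b ×ˢ Icc 0 T, H y := by
  have hint : ∀ c d : ℝ, IntegrableOn H (Icc a b ×ˢ Icc c d) (volume.prod volume) := fun c d => by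
    rw [← Measure.volume_eq_prod]
    exact hH.continuousOn.integrableOn_compact (isCompact_Icc.prod isCompact_Icc)
  rw [Measure.volume_eq_prod, setIntegral_prod _ (hint _ _), setIntegral_prod _ (hint _ _)]
  refine setIntegral_congr_fun measurableSet_Icc fun r _ => ?_
  have hperr : Function.Periodic (fun u => H (r, u)) T := fun u => by
    simpa using hper (r, u)
  simp only [integral_Icc_eq_integral_Ioc, ← intervalIntegral.integral_of_le
    (le_add_of_nonneg_right hT), ← intervalIntegral.integral_of_le hT]
  simpa using hperr.intervalIntegral_add_eq t 0

theorem setIntegral_Icc_prod_le_exp_neg_mul_setIntegral {H : ℝ × ℝ → ℝ} (hH : Continuous H)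
    (hH0 : ∀ q, 0 ≤ H q) {a : ℝ} (ha : 0 ≤ a)
    (hint : IntegrableOn (fun q : ℝ × ℝ => Real.exp (a * q.1) * H q) (Ici 0 ×ˢ Icc 0 1))
    {s : ℝ} (hs : 0 ≤ s) (b : ℝ) :
    ∫ y in Icc s b ×ˢ Icc 0 1, H y ≤
      Real.exp (-(a * s)) * ∫ q in Ici 0 ×ˢ Icc 0 1, Real.exp (a * q.1) * H q := by
  have hK : IsCompact (Icc s b ×ˢ Icc (0 : ℝ) 1) := isCompact_Icc.prod isCompact_Icc
  have hsub : Icc s b ×ˢ Icc (0 : ℝ) 1 ⊆ Ici 0 ×ˢ Icc 0 1 :=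
    prod_mono (fun r hr => hs.trans hr.1) subset_rfl
  rw [Real.exp_neg, ← div_eq_inv_mul, le_div_iff₀' (Real.exp_pos _), ← integral_const_mul]
  calc ∫ y in Icc s b ×ˢ Icc 0 1, Real.exp (a * s) * H y
      ≤ ∫ q in Icc s b ×ˢ Icc 0 1, Real.exp (a * q.1) * H q :=
        setIntegral_mono_on ((continuous_const.mul hH).continuousOn.integrableOn_compact hK)
          (hint.mono_set hsub) hK.measurableSet fun q hq =>
            mul_le_mul_of_nonneg_right (Real.exp_le_exp.2 (by nlinarith [hq.1.1])) (hH0 q)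
    _ ≤ ∫ q in Ici 0 ×ˢ Icc 0 1, Real.exp (a * q.1) * H q :=
        setIntegral_mono_set hint (.of_forall fun q => mul_nonneg (Real.exp_nonneg _) (hH0 q))
          hsub.eventuallyLE

theorem tendsto_iSup_abs_of_le_mul_exp {ι : Type*} [Nonempty ι] {f : ℝ → ι → ℝ} {A B ν : ℝ}
    (hν : 0 < ν) (hf : ∀ s ≥ 0, ∀ i, |f s i| ≤ A * Real.exp (-ν * s) * B) :
    Tendsto (fun s => ⨆ i, |f s i|) atTop (𝓝 0) := by
  have hexp : Tendsto (fun s => A * Real.exp (-ν * s) * B) atTop (𝓝 0) := by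
    simpa [neg_mul] using ((Real.tendsto_exp_neg_atTop_nhds_zero.comp
      (tendsto_id.const_mul_atTop hν)).const_mul A).mul_const B
  refine squeeze_zero' (.of_forall fun s => Real.iSup_nonneg fun i => abs_nonneg _) ?_ hexp
  filter_upwards [eventually_ge_atTop 0] with s hs using ciSup_le (hf s hs)

noncomputable def cylinderSobolevNorm (p ν : ℝ) (g : ℝ × ℝ → ℝ) : ℝ :=
  (∫ q in Ici (0 : ℝ) ×ˢ Icc (0 : ℝ) 1,
    Real.exp (p * ν * q.1) * (|g q| ^ p + ‖fderiv ℝ g q‖ ^ p)) ^ (1 / p)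

theorem abs_le_mul_exp_mul_cylinderSobolevNorm {p ν : ℝ} (hp : 2 < p)
    (hν : 0 ≤ ν) {g : ℝ × ℝ → ℝ} (hg : ContDiff ℝ 1 g) (hper : Function.Periodic g (0, 1))
    (hint : IntegrableOn
      (fun q : ℝ × ℝ => Real.exp (p * ν * q.1) * (|g q| ^ p + ‖fderiv ℝ g q‖ ^ p))
      (Ici 0 ×ˢ Icc 0 1)) {s : ℝ} (hs : 0 ≤ s) (t : ℝ) :
    |g (s, t)| ≤ (1 + p / (p - 2)) * Real.exp (-ν * s) * cylinderSobolevNorm p ν g := by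
  set H : ℝ × ℝ → ℝ := fun q => |g q| ^ p + ‖fderiv ℝ g q‖ ^ p
  have hp0 : 0 ≤ p := by linarith
  have hH : Continuous H := (hg.continuous.abs.rpow_const fun _ => .inr hp0).add
    ((hg.continuous_fderiv one_ne_zero).norm.rpow_const fun _ => .inr hp0)
  have hHper : Function.Periodic H (0, 1) := fun q => by
    simp only [H, hper q, hper.fderiv q]
  calc |g (s, t)| ≤ (1 + p / (p - 2)) * (∫ y in Icc s (s + 1) ×ˢ Icc t (t + 1), H y) ^ (1 / p) :=
        abs_le_mul_integral_rpow_unitSquare hp hg (s, t)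
    _ = (1 + p / (p - 2)) * (∫ y in Icc s (s + 1) ×ˢ Icc 0 1, H y) ^ (1 / p) := by
        rw [hHper.setIntegral_Icc_prod_Icc_add hH zero_le_one]
    _ ≤ (1 + p / (p - 2)) * (Real.exp (-(p * ν * s)) *
          ∫ q in Ici 0 ×ˢ Icc 0 1, Real.exp (p * ν * q.1) * H q) ^ (1 / p) := by
        gcongr
        exact setIntegral_Icc_prod_le_exp_neg_mul_setIntegral hH (fun q => by positivity)
          (by positivity) hint hs _
    _ = _ := by
        rw [Real.mul_rpow (Real.exp_nonneg _) (setIntegral_nonneg (measurableSet_Ici.prod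
          measurableSet_Icc) fun q _ => by positivity), ← Real.exp_mul, cylinderSobolevNorm]
        field_simp
        rfl

/-- Exponential decay along a cylindrical end: for `p > 2` and `ν > 0` there is
`C = C(p, ν) > 0` such that every `C¹` function `g : ℝ² → ℝ` which is `1`-periodic in the
second variable and has finite weighted norm
`M = (∫_{[0,∞)×[0,1]} e^{pνs}(|g|^p + ‖Dg‖^p) ds dt)^{1/p}` satisfies
`|g(s,t)| ≤ C e^{−νs} M` for all `s ≥ 0` and `t ∈ ℝ`; in particular
`sup_t |g(s,t)| → 0` as `s → ∞`. -/
theorem exponential_decay_on_cylinder (p ν : ℝ) (hp : 2 < p) (hν : 0 < ν) :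
    ∃ C > 0, ∀ g : ℝ × ℝ → ℝ, ContDiff ℝ 1 g →
      (∀ s t : ℝ, g (s, t + 1) = g (s, t)) →
      IntegrableOn
        (fun q : ℝ × ℝ => Real.exp (p * ν * q.1) * (|g q| ^ p + ‖fderiv ℝ g q‖ ^ p))
        (Set.Ici (0 : ℝ) ×ˢ Set.Icc (0 : ℝ) 1) volume →
      (∀ s ≥ (0 : ℝ), ∀ t : ℝ,
          |g (s, t)| ≤
            C * Real.exp (-ν * s) *
              (∫ q in Set.Ici (0 : ℝ) ×ˢ Set.Icc (0 : ℝ) 1,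
                  Real.exp (p * ν * q.1) * (|g q| ^ p + ‖fderiv ℝ g q‖ ^ p)) ^ (1 / p)) ∧
        Filter.Tendsto (fun s : ℝ => ⨆ t : ℝ, |g (s, t)|) Filter.atTop (nhds 0) := by
  refine ⟨1 + p / (p - 2), add_pos one_pos (div_pos (by linarith) (by linarith)),
    fun g hg hper hint => ?_⟩
  have hgper : Function.Periodic g (0, 1) := fun ⟨s, t⟩ => by simpa using hper s t
  have decay : ∀ s ≥ (0 : ℝ), ∀ t : ℝ,
      |g (s, t)| ≤ (1 + p / (p - 2)) * Real.exp (-ν * s) * cylinderSobolevNorm p ν g :=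
    fun s hs t => abs_le_mul_exp_mul_cylinderSobolevNorm hp hν.le hg hgper hint hs t
  exact ⟨decay, tendsto_iSup_abs_of_le_mul_exp hν decay⟩
end
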